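/- arXiv:1106.1781 — 9 statements merged into one kernel-verified Lean document; each statement's English description precedes it below -/
import Mathlib

section
/- Let σ and τ be integers with 0 ≤ τ < σ. For every ε > 0 there exists a constant c(ε) > 0, independent of N and of the grid function, such that for every integer N ≥ 1 and every periodic grid function z one has ‖D₊^τ z‖_h² ≤ ε ‖D₊^σ z‖_h² + c(ε) ‖z‖_h². -/
/-- Forward difference operator `(D₊u)_i = (u_{i+1} − u_i)/h`. -/
noncomputable def Dp (h : ℝ) (u : ℤ → ℝ) : ℤ → ℝ := fun i => (u (i + 1) - u i) / h

/-- Backward difference operator `(D₋u)_i = (u_i − u_{i−1})/h`. -/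
noncomputable def Dm (h : ℝ) (u : ℤ → ℝ) : ℤ → ℝ := fun i => (u i - u (i - 1)) / h

/-- Central difference operator `(D₀u)_i = (u_{i+1} − u_{i−1})/(2h)`. -/
noncomputable def D0 (h : ℝ) (u : ℤ → ℝ) : ℤ → ℝ := fun i => (u (i + 1) - u (i - 1)) / (2 * h)

/-- Discrete inner product `(f,g)_h = h Σ_{i=1}^N f_i g_i`. -/
noncomputable def iph (N : ℕ) (h : ℝ) (f g : ℤ → ℝ) : ℝ :=
  h * ∑ i ∈ Finset.Icc (1 : ℤ) (N : ℤ), f i * g i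

/-- Discrete squared norm `‖f‖_h² = h Σ_{i=1}^N f_i²`. -/
noncomputable def nh2 (N : ℕ) (h : ℝ) (f : ℤ → ℝ) : ℝ :=
  h * ∑ i ∈ Finset.Icc (1 : ℤ) (N : ℤ), (f i) ^ 2

/-- Discrete norm `‖f‖_h`. -/
noncomputable def normh (N : ℕ) (h : ℝ) (f : ℤ → ℝ) : ℝ := Real.sqrt (nh2 N h f)

/-- A periodic grid function with period `N`: `u_{i+N} = u_i` for all `i`. -/
def PeriodicGrid (N : ℕ) (u : ℤ → ℝ) : Prop := ∀ i : ℤ, u (i + N) = u i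

/-!
Summation by parts and Cauchy–Schwarz give `‖D₊v‖_h² ≤ ‖v‖_h ‖D₊²v‖_h` for every periodic `v`,
so `a k = ‖D₊^k z‖_h²` is a log-convex sequence: `a (k+1)² ≤ a k · a (k+2)`. By AM–GM this gives
`a (k+1) ≤ δ a (k+2) + a k / (4δ)` for every `δ > 0`, and an induction first on `k`, then on
`σ - τ`, yields `a τ ≤ ε a σ + c a 0` with `c` depending only on `ε`, `τ`, `σ`, not on the
sequence, hence not on `N` or `z`.
-/

open Finset

theorem Function.Periodic.sum_Icc_one_comp_add_one {M : Type*} [AddCommGroup M] {f : ℤ → M}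
    {N : ℕ} (hf : Function.Periodic f N) :
    ∑ i ∈ Icc (1 : ℤ) N, f (i + 1) = ∑ i ∈ Icc (1 : ℤ) N, f i := by
  have hshift : ∑ i ∈ Icc (1 : ℤ) N, f (i + 1) = ∑ i ∈ Icc (1 + 1 : ℤ) (N + 1), f i := by
    rw [← map_add_right_Icc, sum_map]
    rfl
  apply add_left_cancel (a := f 1)
  calc f 1 + ∑ i ∈ Icc (1 : ℤ) N, f (i + 1) = ∑ i ∈ Icc (1 : ℤ) (N + 1), f i := by
        rw [hshift, ← sum_insert (by simp), insert_Icc_add_one_left_eq_Icc (by omega)]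
    _ = f (N + 1) + ∑ i ∈ Icc (1 : ℤ) N, f i := by
        rw [← sum_insert (by simp), insert_Icc_right_eq_Icc_add_one (by omega)]
    _ = f 1 + ∑ i ∈ Icc (1 : ℤ) N, f i := by rw [add_comm (N : ℤ), hf]

section GridFunctions

variable {N : ℕ} {h : ℝ} {u w : ℤ → ℝ}

theorem PeriodicGrid.dp (hu : PeriodicGrid N u) (h : ℝ) : PeriodicGrid N (Dp h u) := fun i => by
  simp only [Dp, add_right_comm i (N : ℤ) 1, hu (i + 1), hu i]

theorem PeriodicGrid.iterate_dp (hu : PeriodicGrid N u) (h : ℝ) (k : ℕ) :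
    PeriodicGrid N ((Dp h)^[k] u) := by
  induction k with
  | zero => exact hu
  | succ k ih => simpa only [Function.iterate_succ_apply'] using ih.dp h

theorem nh2_nonneg (hh : 0 ≤ h) (f : ℤ → ℝ) : 0 ≤ nh2 N h f :=
  mul_nonneg hh (sum_nonneg fun _ _ => sq_nonneg _)

theorem nh2_eq_iph (f : ℤ → ℝ) : nh2 N h f = iph N h f f := by
  simp only [nh2, iph, sq]

theorem iph_sq_le_nh2_mul_nh2 (f g : ℤ → ℝ) : iph N h f g ^ 2 ≤ nh2 N h f * nh2 N h g := by
  simp only [iph, nh2]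
  calc (h * ∑ i ∈ Icc (1 : ℤ) N, f i * g i) ^ 2
      = h ^ 2 * (∑ i ∈ Icc (1 : ℤ) N, f i * g i) ^ 2 := by ring
    _ ≤ h ^ 2 * ((∑ i ∈ Icc (1 : ℤ) N, f i ^ 2) * ∑ i ∈ Icc (1 : ℤ) N, g i ^ 2) :=
        mul_le_mul_of_nonneg_left (sum_mul_sq_le_sq_mul_sq _ _ _) (sq_nonneg h)
    _ = _ := by ring

theorem iph_dp_left (hh : h ≠ 0) (hu : PeriodicGrid N u) (hw : PeriodicGrid N w) :
    iph N h (Dp h u) w = -iph N h u (Dm h w) := by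
  have hperiodic : Function.Periodic (fun i => u i * w (i - 1)) N :=
    Function.Periodic.mul hu (Function.Periodic.sub_const hw 1)
  have hshift := hperiodic.sum_Icc_one_comp_add_one
  simp only [add_sub_cancel_right] at hshift
  have hterm : ∀ i,
      h * (Dp h u i * w i) + h * (u i * Dm h w i) = u (i + 1) * w i - u i * w (i - 1) := by
    intro i
    simp only [Dp, Dm]
    field_simp
    ring
  rw [← add_eq_zero_iff_eq_neg, iph, iph, mul_sum, mul_sum, ← sum_add_distrib]
  simp only [hterm, sum_sub_distrib, hshift, sub_self]

theorem nh2_dm (hw : PeriodicGrid N w) : nh2 N h (Dm h w) = nh2 N h (Dp h w) := by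
  have hperiodic : Function.Periodic (fun i => Dp h w (i - 1) ^ 2) N :=
    (Function.Periodic.sub_const (hw.dp h) 1).comp (· ^ 2)
  have hshift := hperiodic.sum_Icc_one_comp_add_one
  simp only [add_sub_cancel_right] at hshift
  have hdm : Dm h w = fun i => Dp h w (i - 1) := by
    funext i
    simp only [Dm, Dp, sub_add_cancel]
  rw [nh2, nh2, hdm, hshift]

theorem nh2_dp_sq_le (hh : h ≠ 0) (hu : PeriodicGrid N u) :
    nh2 N h (Dp h u) ^ 2 ≤ nh2 N h u * nh2 N h (Dp h (Dp h u)) :=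
  calc nh2 N h (Dp h u) ^ 2 = iph N h u (Dm h (Dp h u)) ^ 2 := by
        rw [nh2_eq_iph, iph_dp_left hh hu (hu.dp h), neg_sq]
    _ ≤ nh2 N h u * nh2 N h (Dm h (Dp h u)) := iph_sq_le_nh2_mul_nh2 _ _
    _ = nh2 N h u * nh2 N h (Dp h (Dp h u)) := by rw [nh2_dm (hu.dp h)]

end GridFunctions

theorem le_mul_add_div_of_sq_le_mul {x y z δ : ℝ} (hx : 0 ≤ x) (hz : 0 ≤ z) (hδ : 0 < δ)
    (hy : y ^ 2 ≤ x * z) : y ≤ δ * z + x / (4 * δ) := by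
  have hsum : 0 ≤ δ * z + x / (4 * δ) := by positivity
  have hprod : δ * z * (x / (4 * δ)) = x * z / 4 := by field_simp
  refine le_trans (le_abs_self y) (abs_le_of_sq_le_sq ?_ hsum)
  nlinarith [sq_nonneg (δ * z - x / (4 * δ))]

structure IsLogConvexSeq (a : ℕ → ℝ) : Prop where
  nonneg : ∀ k, 0 ≤ a k
  sq_le : ∀ k, a (k + 1) ^ 2 ≤ a k * a (k + 2)

theorem IsLogConvexSeq.exists_le_mul_succ_add (j : ℕ) {ε : ℝ} (hε : 0 < ε) :
    ∃ c > 0, ∀ a, IsLogConvexSeq a → a j ≤ ε * a (j + 1) + c * a 0 := by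
  induction j generalizing ε with
  | zero => exact ⟨1, one_pos, fun a ha => by linarith [mul_nonneg hε.le (ha.nonneg 1)]⟩
  | succ j ih =>
    obtain ⟨c, hc, hj⟩ := ih hε
    refine ⟨c / ε, by positivity, fun a ha => ?_⟩
    have hamgm : a (j + 1) ≤ ε / 2 * a (j + 2) + a j / (2 * ε) := by
      convert le_mul_add_div_of_sq_le_mul (ha.nonneg j) (ha.nonneg (j + 2)) (half_pos hε)
        (ha.sq_le j) using 3
      ring
    have hprev : a j / (2 * ε) ≤ a (j + 1) / 2 + c / ε * a 0 / 2 :=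
      calc a j / (2 * ε) ≤ (ε * a (j + 1) + c * a 0) / (2 * ε) := by gcongr; exact hj a ha
        _ = a (j + 1) / 2 + c / ε * a 0 / 2 := by field_simp
    linarith

theorem IsLogConvexSeq.exists_le_mul_add {τ σ : ℕ} (hτσ : τ < σ) {ε : ℝ} (hε : 0 < ε) :
    ∃ c > 0, ∀ a, IsLogConvexSeq a → a τ ≤ ε * a σ + c * a 0 := by
  induction σ, hτσ using Nat.le_induction generalizing ε with
  | base => exact IsLogConvexSeq.exists_le_mul_succ_add τ hε
  | succ σ hσ ih =>
    obtain ⟨c₁, hc₁, h₁⟩ := ih one_pos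
    obtain ⟨c₂, hc₂, h₂⟩ := IsLogConvexSeq.exists_le_mul_succ_add σ hε
    refine ⟨c₁ + c₂, by positivity, fun a ha => ?_⟩
    linarith [h₁ a ha, h₂ a ha]

theorem isLogConvexSeq_nh2_iterate_dp {N : ℕ} {h : ℝ} {u : ℤ → ℝ} (hh : 0 < h)
    (hu : PeriodicGrid N u) : IsLogConvexSeq fun k => nh2 N h ((Dp h)^[k] u) where
  nonneg _ := nh2_nonneg hh.le _
  sq_le k := by
    simpa only [Function.iterate_succ_apply'] using nh2_dp_sq_le hh.ne' (hu.iterate_dp h k)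

/-- Paper's Lemma 2.3: for integers `0 ≤ τ < σ` and every `ε > 0` there is a constant
`c(ε) > 0`, independent of `N` and of the grid function, such that for every `N ≥ 1` and every
periodic grid function `z`, `‖D₊^τ z‖_h² ≤ ε ‖D₊^σ z‖_h² + c(ε) ‖z‖_h²` (with `Δx = 1/N`). -/
theorem discrete_interpolation (σ τ : ℕ) (hτσ : τ < σ) (ε : ℝ) (hε : 0 < ε) :
    ∃ c > 0, ∀ N : ℕ, 1 ≤ N → ∀ z : ℤ → ℝ, PeriodicGrid N z →
      nh2 N (1 / N) ((Dp (1 / N))^[τ] z)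
        ≤ ε * nh2 N (1 / N) ((Dp (1 / N))^[σ] z) + c * nh2 N (1 / N) z := by
  obtain ⟨c, hc, hinterp⟩ := IsLogConvexSeq.exists_le_mul_add hτσ hε
  refine ⟨c, hc, fun N hN z hz => ?_⟩
  exact hinterp _ (isLogConvexSeq_nh2_iterate_dp (one_div_pos.2 (Nat.cast_pos.2 hN)) hz)
end

section
/- For every integer N ≥ 1 and every periodic grid function u one has the summation-by-parts identity (u, D₊³D₋²u)_h = −(Δx/2) ‖D₋D₊²u‖_h². -/
/-!
`D₊` and `D₋` commute, and on periodic grid functions they are adjoint up to sign,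
`(f, D₊g)_h = −(D₋f, g)_h`. Writing `D₊³D₋² = D₋²D₊³` and moving `D₋²` across the inner product
turns the left side into `(w, D₊w)_h = −(w, D₋w)_h` with `w = D₊²u`. The pointwise identity
`w_i (D₋w)_i = (h/2) (D₋w)_i² + (w_i² − w_{i−1}²)/(2h)`, whose last term telescopes over a
period, gives `(w, D₋w)_h = (h/2) ‖D₋w‖_h²`.
-/

open Finset

namespace PeriodicGrid

variable {N : ℕ} {f : ℤ → ℝ}

lemma dp_s5 (hf : PeriodicGrid N f) (h : ℝ) : PeriodicGrid N (Dp h f) := fun i => by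
  rw [Dp, Dp, add_right_comm, hf, hf]

lemma dm (hf : PeriodicGrid N f) (h : ℝ) : PeriodicGrid N (Dm h f) := fun i => by
  rw [Dm, Dm, add_sub_right_comm, hf, hf]

lemma sum_Icc_comp_add_one (hf : PeriodicGrid N f) :
    ∑ i ∈ Icc (1 : ℤ) N, f (i + 1) = ∑ i ∈ Icc (1 : ℤ) N, f i := by
  have hle : (1 : ℤ) ≤ N + 1 := by omega
  have hbot : ∑ i ∈ Icc (1 : ℤ) N, f (i + 1) + f 1 = ∑ i ∈ Icc (1 : ℤ) (N + 1), f i := by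
    rw [← insert_Icc_add_one_left_eq_Icc hle, sum_insert (by simp), ← map_add_right_Icc,
      sum_map, add_comm]
    rfl
  have htop : ∑ i ∈ Icc (1 : ℤ) N, f i + f 1 = ∑ i ∈ Icc (1 : ℤ) (N + 1), f i := by
    rw [← insert_Icc_right_eq_Icc_add_one hle, sum_insert (by simp), add_comm (N : ℤ), hf 1,
      add_comm]
  linarith

end PeriodicGrid

lemma Dp_Dm_comm (h : ℝ) (u : ℤ → ℝ) : Dp h (Dm h u) = Dm h (Dp h u) := by
  funext i
  simp only [Dp, Dm, add_sub_cancel_right, sub_add_cancel]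

lemma iph_comm (N : ℕ) (h : ℝ) (f g : ℤ → ℝ) : iph N h f g = iph N h g f := by
  simp only [iph, mul_comm (f _)]

section SummationByParts

variable {N : ℕ} {h : ℝ} {f g : ℤ → ℝ}

lemma iph_Dp (hf : PeriodicGrid N f) (hg : PeriodicGrid N g) :
    iph N h f (Dp h g) = -iph N h (Dm h f) g := by
  have hfg : PeriodicGrid N (fun i => f (i - 1) * g i) := fun i => by
    dsimp only
    rw [add_sub_right_comm, hf, hg]
  have hshift := hfg.sum_Icc_comp_add_one
  simp only [add_sub_cancel_right] at hshift
  simp only [iph, Dp, Dm, mul_div_assoc', div_mul_eq_mul_div, ← sum_div, mul_sub, sub_mul,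
    sum_sub_distrib, hshift]
  ring

lemma iph_Dm (hf : PeriodicGrid N f) (hg : PeriodicGrid N g) :
    iph N h f (Dm h g) = -iph N h (Dp h f) g := by
  rw [iph_comm N h (Dp h f), iph_Dp hg hf, neg_neg, iph_comm]

lemma iph_Dm_self (hf : PeriodicGrid N f) :
    iph N h f (Dm h f) = h / 2 * nh2 N h (Dm h f) := by
  have hsq : PeriodicGrid N (fun i => f (i - 1) ^ 2) := fun i => by
    dsimp only
    rw [add_sub_right_comm, hf]
  have htel : ∑ i ∈ Icc (1 : ℤ) N, (f i ^ 2 - f (i - 1) ^ 2) = 0 := by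
    have hshift := hsq.sum_Icc_comp_add_one
    simp only [add_sub_cancel_right] at hshift
    rw [sum_sub_distrib, hshift, sub_self]
  have hpt : ∀ i, f i * Dm h f i = h / 2 * Dm h f i ^ 2 + (f i ^ 2 - f (i - 1) ^ 2) / (2 * h) := by
    intro i
    rcases eq_or_ne h 0 with rfl | hh
    · simp [Dm]
    · simp only [Dm]
      field_simp
      ring
  simp only [iph, nh2, hpt, sum_add_distrib, ← mul_sum, ← sum_div, htel]
  ring

end SummationByParts

theorem summation_by_parts_kawahara_general (N : ℕ) (Δx : ℝ)
    (u : ℤ → ℝ) (hu : PeriodicGrid N u) :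
    iph N Δx u (Dp Δx (Dp Δx (Dp Δx (Dm Δx (Dm Δx u)))))
      = -(Δx / 2) * nh2 N Δx (Dm Δx (Dp Δx (Dp Δx u))) := by
  have hu₁ := hu.dp_s5 Δx
  have hw := hu₁.dp_s5 Δx
  calc iph N Δx u (Dp Δx (Dp Δx (Dp Δx (Dm Δx (Dm Δx u)))))
      = iph N Δx u (Dm Δx (Dm Δx (Dp Δx (Dp Δx (Dp Δx u))))) := by simp only [Dp_Dm_comm]
    _ = iph N Δx (Dp Δx (Dp Δx u)) (Dp Δx (Dp Δx (Dp Δx u))) := by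
      rw [iph_Dm hu ((hw.dp_s5 Δx).dm Δx), iph_Dm hu₁ (hw.dp_s5 Δx), neg_neg]
    _ = -iph N Δx (Dp Δx (Dp Δx u)) (Dm Δx (Dp Δx (Dp Δx u))) := by
      rw [iph_Dp hw hw, iph_comm]
    _ = -(Δx / 2) * nh2 N Δx (Dm Δx (Dp Δx (Dp Δx u))) := by
      rw [iph_Dm_self hw, neg_mul]

/-- Summation-by-parts identity for the discrete Kawahara term (used in the proof of
Theorem 2.4): for every `N ≥ 1` and every periodic grid function `u`,
`(u, D₊³D₋²u)_h = −(Δx/2) ‖D₋D₊²u‖_h²` with `Δx = 1/N`. -/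
theorem summation_by_parts_kawahara (N : ℕ) (hN : 1 ≤ N) (Δx : ℝ) (hΔx : Δx = 1 / N)
    (u : ℤ → ℝ) (hu : PeriodicGrid N u) :
    iph N Δx u (Dp Δx (Dp Δx (Dp Δx (Dm Δx (Dm Δx u)))))
      = -(Δx / 2) * nh2 N Δx (Dm Δx (Dp Δx (Dp Δx u))) :=
  summation_by_parts_kawahara_general N Δx u hu
end

section
/- Let u : ℝ × [0,T] → ℝ be a smooth solution of the Kawahara equation u_t = −u u_x − u_{xxx} + u_{xxxxx} that is 1-periodic in x. Then for every t ∈ [0,T]: ∫₀¹ u(x,t)² dx = ∫₀¹ u(x,0)² dx. -/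
open MeasureTheory intervalIntegral Set Metric

private lemma kaw_iteratedDeriv_periodic (v : ℝ → ℝ) (hv : ∀ x, v (x + 1) = v x) (n : ℕ)
    (x : ℝ) : iteratedDeriv n v (x + 1) = iteratedDeriv n v x := by
  have h : (fun z => v (z + 1)) = v := funext hv
  have h2 := congrFun (iteratedDeriv_comp_add_const n v 1) x
  rw [h] at h2
  exact h2.symm

private lemma kaw_hasDerivAt_iter (v : ℝ → ℝ) (hv : ContDiff ℝ (⊤ : ℕ∞) v) (n : ℕ) (x : ℝ) :
    HasDerivAt (iteratedDeriv n v) (iteratedDeriv (n + 1) v x) x := by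
  have hdiff : Differentiable ℝ (iteratedDeriv n v) :=
    hv.differentiable_iteratedDeriv n (by exact_mod_cast lt_top_iff_ne_top.2 (by simp))
  rw [iteratedDeriv_succ]
  exact (hdiff x).hasDerivAt

private lemma kaw_G_deriv (v : ℝ → ℝ) (hv : ContDiff ℝ (⊤ : ℕ∞) v) (x : ℝ) :
    HasDerivAt (fun y => -(2/3) * v y ^ 3 - 2 * (v y * iteratedDeriv 2 v y)
        + (iteratedDeriv 1 v y) ^ 2 + 2 * (v y * iteratedDeriv 4 v y)
        - 2 * (iteratedDeriv 1 v y * iteratedDeriv 3 v y) + (iteratedDeriv 2 v y) ^ 2)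
      (2 * v x * (-v x * iteratedDeriv 1 v x - iteratedDeriv 3 v x + iteratedDeriv 5 v x)) x := by
  have h0 : HasDerivAt v (iteratedDeriv 1 v x) x := by
    simpa [iteratedDeriv_zero] using kaw_hasDerivAt_iter v hv 0 x
  have h1 := kaw_hasDerivAt_iter v hv 1 x
  have h2 := kaw_hasDerivAt_iter v hv 2 x
  have h3 := kaw_hasDerivAt_iter v hv 3 x
  have h4 := kaw_hasDerivAt_iter v hv 4 x
  have A := HasDerivAt.const_mul (-(2/3) : ℝ) (h0.pow 3)
  have B := HasDerivAt.const_mul (2 : ℝ) (h0.mul h2)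
  have C := h1.pow 2
  have D := HasDerivAt.const_mul (2 : ℝ) (h0.mul h4)
  have E := HasDerivAt.const_mul (2 : ℝ) (h1.mul h3)
  have F := h2.pow 2
  have total := ((((A.sub B).add C).add D).sub E).add F
  refine total.congr_deriv ?_
  push_cast
  ring

/-- Paper's Lemma 2.4, conservation law (2.21): if `u` is a smooth solution of the Kawahara
equation `u_t = −u u_x − u_{xxx} + u_{xxxxx}` on `ℝ × [0,T]`, 1-periodic in `x`, then the
`L²` norm on a period is conserved: `∫₀¹ u(x,t)² dx = ∫₀¹ u(x,0)² dx` for all `t ∈ [0,T]`. -/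
theorem kawahara_L2_conservation (T : ℝ) (hT : 0 ≤ T) (u : ℝ → ℝ → ℝ)
    (hsmooth : ContDiff ℝ (⊤ : ℕ∞) (Function.uncurry u))
    (hper : ∀ x t : ℝ, u (x + 1) t = u x t)
    (heq : ∀ x : ℝ, ∀ t ∈ Set.Icc (0 : ℝ) T,
      deriv (fun s => u x s) t =
        - u x t * deriv (fun y => u y t) x
        - iteratedDeriv 3 (fun y => u y t) x
        + iteratedDeriv 5 (fun y => u y t) x) :
    ∀ t ∈ Set.Icc (0 : ℝ) T,
      (∫ x in (0:ℝ)..1, (u x t) ^ 2) = ∫ x in (0:ℝ)..1, (u x 0) ^ 2 := by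
  -- time derivative of u expressed via the full Fréchet derivative
  have hψ : ∀ x s : ℝ, HasDerivAt (fun r => u x r)
      (fderiv ℝ (Function.uncurry u) (x, s) (0, 1)) s := by
    intro x s
    have h1 : HasFDerivAt (Function.uncurry u)
        (fderiv ℝ (Function.uncurry u) (x, s)) (x, s) :=
      (hsmooth.differentiable (by simp) (x, s)).hasFDerivAt
    have h2 : HasDerivAt (fun r : ℝ => ((x : ℝ), r)) ((0 : ℝ), (1 : ℝ)) s :=
      (hasDerivAt_const s x).prodMk (hasDerivAt_id s)
    exact h1.comp_hasDerivAt s h2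
  -- joint continuity of the integrand of the differentiated integral
  have hcontψ : Continuous (fun p : ℝ × ℝ => fderiv ℝ (Function.uncurry u) p ((0 : ℝ), (1 : ℝ))) :=
    (ContinuousLinearMap.apply ℝ ℝ ((0 : ℝ), (1 : ℝ))).continuous.comp
      (hsmooth.continuous_fderiv (by simp))
  have hcontu : Continuous (fun p : ℝ × ℝ => u p.1 p.2) := hsmooth.continuous
  have hcontF' : Continuous (fun p : ℝ × ℝ =>
      2 * u p.1 p.2 * fderiv ℝ (Function.uncurry u) p ((0 : ℝ), (1 : ℝ))) :=
    (continuous_const.mul hcontu).mul hcontψ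
  -- smoothness of x-sections
  have hvs : ∀ s : ℝ, ContDiff ℝ (⊤ : ℕ∞) (fun y => u y s) :=
    fun s => hsmooth.comp (contDiff_id.prodMk contDiff_const)
  -- Step 2: vanishing of the differentiated integral on [0,T]
  have key : ∀ s ∈ Set.Icc (0 : ℝ) T,
      (∫ x in (0:ℝ)..1, 2 * u x s * fderiv ℝ (Function.uncurry u) (x, s) ((0:ℝ), (1:ℝ))) = 0 := by
    intro s hs
    have hint : IntervalIntegrable
        (fun x => 2 * u x s * fderiv ℝ (Function.uncurry u) (x, s) ((0:ℝ), (1:ℝ)))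
        volume 0 1 :=
      (hcontF'.comp (continuous_id.prodMk continuous_const)).intervalIntegrable 0 1
    have hder : ∀ x ∈ Set.uIcc (0:ℝ) 1,
        HasDerivAt (fun y => -(2/3) * u y s ^ 3 - 2 * (u y s * iteratedDeriv 2 (fun y => u y s) y)
          + (iteratedDeriv 1 (fun y => u y s) y) ^ 2
          + 2 * (u y s * iteratedDeriv 4 (fun y => u y s) y)
          - 2 * (iteratedDeriv 1 (fun y => u y s) y * iteratedDeriv 3 (fun y => u y s) y)
          + (iteratedDeriv 2 (fun y => u y s) y) ^ 2)
        (2 * u x s * fderiv ℝ (Function.uncurry u) (x, s) ((0:ℝ), (1:ℝ))) x := by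
      intro x _
      have h := kaw_G_deriv (fun y => u y s) (hvs s) x
      have hval : 2 * u x s * fderiv ℝ (Function.uncurry u) (x, s) ((0:ℝ), (1:ℝ))
          = 2 * u x s * (-u x s * iteratedDeriv 1 (fun y => u y s) x
            - iteratedDeriv 3 (fun y => u y s) x + iteratedDeriv 5 (fun y => u y s) x) := by
        rw [← (hψ x s).deriv, heq x s hs, iteratedDeriv_one]
      rw [hval]
      exact h
    have hFTC := integral_eq_sub_of_hasDerivAt hder hint
    rw [hFTC]
    have hiter : ∀ n : ℕ, iteratedDeriv n (fun y => u y s) 1 = iteratedDeriv n (fun y => u y s) 0 := by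
      intro n
      simpa using kaw_iteratedDeriv_periodic (fun y => u y s) (fun x => hper x s) n 0
    have hu01 : u 1 s = u 0 s := by simpa using hper 0 s
    simp only [hiter, hu01, sub_self]
  -- Step 1: derivative of the energy
  have hg : ∀ t₀ : ℝ, HasDerivAt (fun r => ∫ x in (0:ℝ)..1, (u x r) ^ 2)
      (∫ x in (0:ℝ)..1, 2 * u x t₀ * fderiv ℝ (Function.uncurry u) (x, t₀) ((0:ℝ), (1:ℝ))) t₀ := by
    intro t₀
    have hK : IsCompact ((Set.uIcc (0:ℝ) 1) ×ˢ (Metric.closedBall t₀ 1)) :=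
      isCompact_uIcc.prod (isCompact_closedBall _ _)
    obtain ⟨C, hC⟩ := hK.exists_bound_of_continuousOn hcontF'.continuousOn
    have hderF : ∀ (x : ℝ) (r : ℝ), HasDerivAt (fun r' => (u x r') ^ 2)
        (2 * u x r * fderiv ℝ (Function.uncurry u) (x, r) ((0:ℝ), (1:ℝ))) r := by
      intro x r
      have h := (hψ x r).pow 2
      refine h.congr_deriv ?_
      push_cast
      ring
    have := intervalIntegral.hasDerivAt_integral_of_dominated_loc_of_deriv_le
      (μ := volume) (a := (0:ℝ)) (b := 1) (bound := fun _ => C)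
      (F := fun r x => (u x r) ^ 2)
      (F' := fun r x => 2 * u x r * fderiv ℝ (Function.uncurry u) (x, r) ((0:ℝ), (1:ℝ)))
      (x₀ := t₀) (Metric.ball_mem_nhds t₀ one_pos)
      (Filter.Eventually.of_forall fun r =>
        (((hcontu.comp (continuous_id.prodMk continuous_const)).pow 2).aestronglyMeasurable))
      (((hcontu.comp (continuous_id.prodMk continuous_const)).pow 2).intervalIntegrable 0 1)
      ((hcontF'.comp (continuous_id.prodMk continuous_const)).aestronglyMeasurable)
      (Filter.Eventually.of_forall fun x hx => fun r hr => by
        have hmem : ((x : ℝ), r) ∈ (Set.uIcc (0:ℝ) 1) ×ˢ (Metric.closedBall t₀ 1) := by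
          exact ⟨uIoc_subset_uIcc hx, ball_subset_closedBall hr⟩
        simpa using hC _ hmem)
      (intervalIntegrable_const)
      (Filter.Eventually.of_forall fun x _ => fun r _ => hderF x r)
    exact this.2
  -- Conclusion via the mean value theorem
  intro t ht
  have hcont : ContinuousOn (fun r => ∫ x in (0:ℝ)..1, (u x r) ^ 2) (Set.Icc 0 T) :=
    fun r _ => ((hg r).differentiableAt.continuousAt).continuousWithinAt
  have hder0 : ∀ r ∈ Set.Ico (0:ℝ) T,
      HasDerivWithinAt (fun r => ∫ x in (0:ℝ)..1, (u x r) ^ 2) 0 (Set.Ici r) r := by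
    intro r hr
    have h := hg r
    rw [key r ⟨hr.1, hr.2.le⟩] at h
    exact h.hasDerivWithinAt
  exact constant_of_has_deriv_right_zero hcont hder0 t ht
end

section
/- For all α₁ ≥ 0 and α₂ ∈ ℝ there exists a constant M = M(α₁, α₂) such that every twice continuously differentiable 1-periodic function u : ℝ → ℝ with ∫₀¹ u(x)² dx = α₁ and ∫₀¹ ( (1/3)u(x)³ − u'(x)² − u''(x)² ) dx = α₂ satisfies ∫₀¹ u''(x)² dx ≤ M and ∫₀¹ u'(x)² dx ≤ M. -/
/-!
Some point `y ∈ [0, 1]` has `u y² ≤ ∫ u²`, and `(u²)' = 2uu' ≤ u² + u'²` then gives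
`sup u² ≤ 2 ∫ u² + ∫ u'²` on `[0, 1]`. Hence `∫ u³ ≤ sup |u| · ∫ u²`, and the second conserved
quantity reads `∫ u'² + ∫ u''² = (1/3) ∫ u³ - α₂ ≤ (α₁/3) √(2α₁ + ∫ u'²) + |α₂|`, which bounds
`∫ u'² + ∫ u''²` because the right side grows only like the square root of the left.
-/

open MeasureTheory Set intervalIntegral
open scoped Interval

theorem exists_mem_Icc_sub_mul_le_integral {f : ℝ → ℝ} {a b : ℝ} (hab : a ≤ b)
    (hf : ContinuousOn f (Icc a b)) : ∃ y ∈ Icc a b, (b - a) * f y ≤ ∫ x in a..b, f x := by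
  obtain ⟨y, hy, hmin⟩ := isCompact_Icc.exists_isMinOn (nonempty_Icc.2 hab) hf
  refine ⟨y, hy, ?_⟩
  calc (b - a) * f y = ∫ _ in a..b, f y := by simp
    _ ≤ ∫ x in a..b, f x :=
      integral_mono_on hab intervalIntegrable_const (hf.intervalIntegrable_of_Icc hab)
        fun _ hx => hmin hx

theorem sq_sub_sq_le_integral_sq_add_deriv_sq {u : ℝ → ℝ} (hu : ContDiff ℝ 1 u) {a b x y : ℝ}
    (hab : a ≤ b) (hx : x ∈ Icc a b) (hy : y ∈ Icc a b) :
    u x ^ 2 - u y ^ 2 ≤ ∫ t in a..b, (u t ^ 2 + deriv u t ^ 2) := by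
  obtain ⟨hdu, hcu'⟩ := contDiff_one_iff_deriv.1 hu
  have hcont : Continuous fun t => u t ^ 2 + deriv u t ^ 2 := (hu.continuous.pow 2).add (hcu'.pow 2)
  have hftc : ∫ t in y..x, 2 * u t * deriv u t = u x ^ 2 - u y ^ 2 :=
    integral_eq_sub_of_hasDerivAt (f := fun t => u t ^ 2)
      (fun t _ => ((hdu t).hasDerivAt.fun_pow 2).congr_deriv (by ring))
      (((continuous_const.mul hu.continuous).mul hcu').intervalIntegrable y x)
  have hsub : Ι y x ⊆ Ioc a b := uIoc_of_le hab ▸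
    uIoc_subset_uIoc_of_uIcc_subset_uIcc (uIcc_subset_uIcc (Icc_subset_uIcc hy) (Icc_subset_uIcc hx))
  calc u x ^ 2 - u y ^ 2 ≤ ‖∫ t in y..x, 2 * u t * deriv u t‖ := hftc ▸ le_abs_self _
    _ ≤ ∫ t in Ι y x, ‖2 * u t * deriv u t‖ := norm_integral_le_integral_norm_uIoc
    _ ≤ ∫ t in Ι y x, (u t ^ 2 + deriv u t ^ 2) := by
      refine setIntegral_mono_on ?_ hcont.integrableOn_uIoc measurableSet_uIoc fun t _ => ?_
      · exact (((continuous_const.mul hu.continuous).mul hcu').norm).integrableOn_uIoc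
      · rw [Real.norm_eq_abs, abs_le]
        constructor <;> nlinarith [sq_nonneg (u t + deriv u t), sq_nonneg (u t - deriv u t)]
    _ ≤ ∫ t in Ioc a b, (u t ^ 2 + deriv u t ^ 2) :=
      setIntegral_mono_set hcont.integrableOn_Ioc (ae_of_all _ fun t => by positivity)
        (ae_of_all _ hsub)
    _ = ∫ t in a..b, (u t ^ 2 + deriv u t ^ 2) := (integral_of_le hab).symm

theorem sq_le_two_mul_integral_sq_add_integral_deriv_sq {u : ℝ → ℝ} (hu : ContDiff ℝ 1 u) {x : ℝ}
    (hx : x ∈ Icc (0 : ℝ) 1) :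
    u x ^ 2 ≤ 2 * (∫ t in (0 : ℝ)..1, u t ^ 2) + ∫ t in (0 : ℝ)..1, deriv u t ^ 2 := by
  have hcu' : Continuous (deriv u) := (contDiff_one_iff_deriv.1 hu).2
  obtain ⟨y, hy, hyle⟩ :=
    exists_mem_Icc_sub_mul_le_integral (f := fun t => u t ^ 2) zero_le_one
      (hu.continuous.pow 2).continuousOn
  have hdiff := sq_sub_sq_le_integral_sq_add_deriv_sq hu zero_le_one hx hy
  rw [integral_add (f := fun t => u t ^ 2) (g := fun t => deriv u t ^ 2)
    ((hu.continuous.pow 2).intervalIntegrable 0 1) ((hcu'.pow 2).intervalIntegrable 0 1)] at hdiff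
  rw [sub_zero, one_mul] at hyle
  linarith

theorem integral_cube_le_mul_integral_sq {u : ℝ → ℝ} (hu : Continuous u) {a b S : ℝ} (hab : a ≤ b)
    (hS : ∀ x ∈ Icc a b, |u x| ≤ S) :
    ∫ x in a..b, u x ^ 3 ≤ S * ∫ x in a..b, u x ^ 2 := by
  rw [← intervalIntegral.integral_const_mul]
  refine integral_mono_on hab ((hu.pow 3).intervalIntegrable a b)
    ((continuous_const.mul (hu.pow 2)).intervalIntegrable a b) fun x hx => ?_
  calc u x ^ 3 ≤ |u x| * u x ^ 2 := by
        rw [pow_succ', ← sub_nonneg, ← sub_mul]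
        exact mul_nonneg (sub_nonneg.2 (le_abs_self _)) (sq_nonneg _)
    _ ≤ S * u x ^ 2 := mul_le_mul_of_nonneg_right (hS x hx) (sq_nonneg _)

theorem add_le_of_add_le_mul_sqrt {p q c d e : ℝ} (hq : 0 ≤ q) (hdp : 0 ≤ d + p)
    (h : p + q ≤ c * √(d + p) + e) : p + q ≤ 4 / 3 * (c ^ 2 + d / 4 + e) := by
  have hs := Real.sq_sqrt hdp
  nlinarith [sq_nonneg (√(d + p) / 2 - c)]

theorem conserved_quantities_control_H2_general (α₁ α₂ : ℝ) :
    ∃ M : ℝ, ∀ u : ℝ → ℝ, ContDiff ℝ 2 u → (∀ x : ℝ, u (x + 1) = u x) →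
      (∫ x in (0:ℝ)..1, (u x) ^ 2) = α₁ →
      (∫ x in (0:ℝ)..1,
          ((1/3) * (u x) ^ 3 - (deriv u x) ^ 2 - (iteratedDeriv 2 u x) ^ 2)) = α₂ →
      (∫ x in (0:ℝ)..1, (iteratedDeriv 2 u x) ^ 2) ≤ M
        ∧ (∫ x in (0:ℝ)..1, (deriv u x) ^ 2) ≤ M := by
  refine ⟨4 / 3 * ((α₁ / 3) ^ 2 + 2 * α₁ / 4 + |α₂|), fun u hu _ h₁ h₂ => ?_⟩
  have hu₁ : ContDiff ℝ 1 u := hu.of_le one_le_two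
  set I₁ := ∫ x in (0:ℝ)..1, deriv u x ^ 2
  set I₂ := ∫ x in (0:ℝ)..1, iteratedDeriv 2 u x ^ 2
  have hα₁ : 0 ≤ α₁ := h₁ ▸ integral_nonneg zero_le_one fun _ _ => sq_nonneg _
  have hI₁ : 0 ≤ I₁ := integral_nonneg zero_le_one fun _ _ => sq_nonneg _
  have hI₂ : 0 ≤ I₂ := integral_nonneg zero_le_one fun _ _ => sq_nonneg _
  have hI : 1 / 3 * ∫ x in (0:ℝ)..1, u x ^ 3 = I₁ + I₂ + α₂ := by
    have hc₀ := hu.continuous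
    have hc₁ := hu.continuous_deriv one_le_two
    have hc₂ := hu.continuous_iteratedDeriv 2 le_rfl
    rw [intervalIntegral.integral_sub, intervalIntegral.integral_sub,
      intervalIntegral.integral_const_mul] at h₂
    · linarith
    all_goals exact Continuous.intervalIntegrable (by fun_prop) 0 1
  have hsup : ∀ x ∈ Icc (0 : ℝ) 1, |u x| ≤ √(2 * α₁ + I₁) := fun x hx =>
    Real.abs_le_sqrt (h₁ ▸ sq_le_two_mul_integral_sq_add_integral_deriv_sq hu₁ hx)
  have hcube := integral_cube_le_mul_integral_sq hu.continuous zero_le_one hsup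
  rw [h₁] at hcube
  have hbound := add_le_of_add_le_mul_sqrt (p := I₁) (c := α₁ / 3) (d := 2 * α₁) (e := |α₂|) hI₂
    (by positivity) (by linarith [neg_abs_le α₂])
  exact ⟨by linarith, by linarith⟩

/-- Key step in the proof of Lemma 2.5: the two conserved quantities of the Kawahara
equation control the `H²` norm. For all `α₁ ≥ 0` and `α₂ ∈ ℝ` there is a constant
`M = M(α₁, α₂)` such that every `C²` 1-periodic `u : ℝ → ℝ` with `∫₀¹ u² = α₁` and
`∫₀¹ ((1/3)u³ − u'² − u''²) = α₂` satisfies `∫₀¹ u''² ≤ M` and `∫₀¹ u'² ≤ M`. -/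
theorem conserved_quantities_control_H2 (α₁ α₂ : ℝ) (hα₁ : 0 ≤ α₁) :
    ∃ M : ℝ, ∀ u : ℝ → ℝ, ContDiff ℝ 2 u → (∀ x : ℝ, u (x + 1) = u x) →
      (∫ x in (0:ℝ)..1, (u x) ^ 2) = α₁ →
      (∫ x in (0:ℝ)..1,
          ((1/3) * (u x) ^ 3 - (deriv u x) ^ 2 - (iteratedDeriv 2 u x) ^ 2)) = α₂ →
      (∫ x in (0:ℝ)..1, (iteratedDeriv 2 u x) ^ 2) ≤ M
        ∧ (∫ x in (0:ℝ)..1, (deriv u x) ^ 2) ≤ M :=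
  conserved_quantities_control_H2_general α₁ α₂
end

section
/- Let u : ℝ × [0,∞) → ℝ be a smooth solution of the Kawahara equation u_t = −u u_x − u_{xxx} + u_{xxxxx} that is 1-periodic in x. Then there exists a constant α (depending only on the initial data u(·,0)) such that |u_x(x,t)| ≤ α for all x ∈ ℝ and all t ≥ 0. -/
open Set MeasureTheory intervalIntegral Metric

namespace Kaw

noncomputable def dx (f : ℝ × ℝ → ℝ) : ℝ × ℝ → ℝ := fun p => fderiv ℝ f p (1, 0)
noncomputable def dt (f : ℝ × ℝ → ℝ) : ℝ × ℝ → ℝ := fun p => fderiv ℝ f p (0, 1)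

lemma contDiff_dx {f : ℝ × ℝ → ℝ} (hf : ContDiff ℝ (⊤ : ℕ∞) f) : ContDiff ℝ (⊤ : ℕ∞) (dx f) :=
  (hf.fderiv_right (by simp)).clm_apply contDiff_const

lemma contDiff_dt {f : ℝ × ℝ → ℝ} (hf : ContDiff ℝ (⊤ : ℕ∞) f) : ContDiff ℝ (⊤ : ℕ∞) (dt f) :=
  (hf.fderiv_right (by simp)).clm_apply contDiff_const

lemma hasDerivAt_slice_x {f : ℝ × ℝ → ℝ} (hf : ContDiff ℝ (⊤ : ℕ∞) f) (x t : ℝ) :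
    HasDerivAt (fun y => f (y, t)) (dx f (x, t)) x := by
  have h1 : HasFDerivAt f (fderiv ℝ f (x, t)) (x, t) :=
    (hf.differentiable (by simp) (x, t)).hasFDerivAt
  have h2 : HasDerivAt (fun y : ℝ => ((y : ℝ), t)) ((1 : ℝ), (0 : ℝ)) x :=
    (hasDerivAt_id x).prodMk (hasDerivAt_const x t)
  exact h1.comp_hasDerivAt x h2

lemma hasDerivAt_slice_t {f : ℝ × ℝ → ℝ} (hf : ContDiff ℝ (⊤ : ℕ∞) f) (x t : ℝ) :
    HasDerivAt (fun s => f (x, s)) (dt f (x, t)) t := by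
  have h1 : HasFDerivAt f (fderiv ℝ f (x, t)) (x, t) :=
    (hf.differentiable (by simp) (x, t)).hasFDerivAt
  have h2 : HasDerivAt (fun s : ℝ => (x, (s : ℝ))) ((0 : ℝ), (1 : ℝ)) t :=
    (hasDerivAt_const t x).prodMk (hasDerivAt_id t)
  exact h1.comp_hasDerivAt t h2

lemma deriv_slice_x {f : ℝ × ℝ → ℝ} (hf : ContDiff ℝ (⊤ : ℕ∞) f) (x t : ℝ) :
    deriv (fun y => f (y, t)) x = dx f (x, t) := (hasDerivAt_slice_x hf x t).deriv

lemma deriv_slice_t {f : ℝ × ℝ → ℝ} (hf : ContDiff ℝ (⊤ : ℕ∞) f) (x t : ℝ) :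
    deriv (fun s => f (x, s)) t = dt f (x, t) := (hasDerivAt_slice_t hf x t).deriv

lemma contDiff_dx_iter {f : ℝ × ℝ → ℝ} (hf : ContDiff ℝ (⊤ : ℕ∞) f) (n : ℕ) :
    ContDiff ℝ (⊤ : ℕ∞) (dx^[n] f) := by
  induction n with
  | zero => exact hf
  | succ n ih => rw [Function.iterate_succ_apply']; exact contDiff_dx ih

lemma iteratedDeriv_slice {f : ℝ × ℝ → ℝ} (hf : ContDiff ℝ (⊤ : ℕ∞) f) (n : ℕ) (x t : ℝ) :
    iteratedDeriv n (fun y => f (y, t)) x = dx^[n] f (x, t) := by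
  induction n generalizing f with
  | zero => simp
  | succ n ih =>
    rw [iteratedDeriv_succ']
    have : deriv (fun y => f (y, t)) = fun y => dx f (y, t) :=
      funext fun y => deriv_slice_x hf y t
    rw [this, ih (contDiff_dx hf), Function.iterate_succ_apply]

lemma dx_dt_comm {f : ℝ × ℝ → ℝ} (hf : ContDiff ℝ (⊤ : ℕ∞) f) (p : ℝ × ℝ) :
    dx (dt f) p = dt (dx f) p := by
  have hΦ : ContDiff ℝ (⊤ : ℕ∞) (fderiv ℝ f) := hf.fderiv_right (by simp)
  have hd : ∀ v : ℝ × ℝ, fderiv ℝ (fun q => fderiv ℝ f q v) p =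
      (fderiv ℝ (fderiv ℝ f) p).flip v := by
    intro v
    have := fderiv_clm_apply (𝕜 := ℝ) (c := fderiv ℝ f) (u := fun _ => v)
      ((hΦ.differentiable (by simp)) p) (differentiableAt_const v)
    simpa using this
  have hsym := second_derivative_symmetric
    (f := f) (f' := fderiv ℝ f) (f'' := fderiv ℝ (fderiv ℝ f) p)
    (fun y => (hf.differentiable (by simp) y).hasFDerivAt)
    ((hΦ.differentiable (by simp) p).hasFDerivAt)
    ((1 : ℝ), (0 : ℝ)) ((0 : ℝ), (1 : ℝ))
  have edt : dt f = fun q => fderiv ℝ f q ((0 : ℝ), (1 : ℝ)) := rfl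
  have edx : dx f = fun q => fderiv ℝ f q ((1 : ℝ), (0 : ℝ)) := rfl
  have h1 : dx (dt f) p = fderiv ℝ (fderiv ℝ f) p ((1 : ℝ), (0 : ℝ)) ((0 : ℝ), (1 : ℝ)) := by
    simp only [dx, edt]
    rw [hd ((0 : ℝ), (1 : ℝ))]
    rfl
  have h2 : dt (dx f) p = fderiv ℝ (fderiv ℝ f) p ((0 : ℝ), (1 : ℝ)) ((1 : ℝ), (0 : ℝ)) := by
    simp only [dt, edx]
    rw [hd ((1 : ℝ), (0 : ℝ))]
    rfl
  rw [h1, h2, hsym]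
def Per (f : ℝ × ℝ → ℝ) : Prop := ∀ x t : ℝ, f (x + 1, t) = f (x, t)

lemma Per.dx' {f : ℝ × ℝ → ℝ} (hf : ContDiff ℝ (⊤ : ℕ∞) f) (hp : Per f) : Per (dx f) := by
  intro x t
  calc dx f (x + 1, t) = deriv (fun y => f (y, t)) (x + 1) := (deriv_slice_x hf _ t).symm
    _ = deriv (fun y => f (y + 1, t)) x := (deriv_comp_add_const (fun y => f (y, t)) 1 x).symm
    _ = deriv (fun y => f (y, t)) x := by
        congr 1; funext y; exact hp y t
    _ = dx f (x, t) := deriv_slice_x hf x t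

lemma Per.dt' {f : ℝ × ℝ → ℝ} (hf : ContDiff ℝ (⊤ : ℕ∞) f) (hp : Per f) : Per (dt f) := by
  intro x t
  calc dt f (x + 1, t) = deriv (fun s => f (x + 1, s)) t := (deriv_slice_t hf _ t).symm
    _ = deriv (fun s => f (x, s)) t := by congr 1; funext s; exact hp x s
    _ = dt f (x, t) := deriv_slice_t hf x t

lemma Per.dx_iter {f : ℝ × ℝ → ℝ} (hf : ContDiff ℝ (⊤ : ℕ∞) f) (hp : Per f) (n : ℕ) :
    Per (dx^[n] f) := by
  induction n with
  | zero => exact hp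
  | succ n ih => rw [Function.iterate_succ_apply']; exact ih.dx' (contDiff_dx_iter hf n)

/-- Differentiation under the interval integral. -/
lemma hasDerivAt_param_integral {F : ℝ × ℝ → ℝ} (hF : ContDiff ℝ (⊤ : ℕ∞) F) (t0 : ℝ) :
    HasDerivAt (fun s => ∫ x in (0:ℝ)..1, F (x, s)) (∫ x in (0:ℝ)..1, dt F (x, t0)) t0 := by
  have hFc : Continuous F := hF.continuous
  have hFtc : Continuous (dt F) := (contDiff_dt hF).continuous
  obtain ⟨C, hC⟩ := (isCompact_Icc.prod isCompact_Icc :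
      IsCompact ((Icc (0:ℝ) 1) ×ˢ (Icc (t0 - 1) (t0 + 1)))).exists_bound_of_continuousOn
      hFtc.continuousOn
  have main := intervalIntegral.hasDerivAt_integral_of_dominated_loc_of_deriv_le
    (F := fun s x => F (x, s)) (F' := fun s x => dt F (x, s)) (x₀ := t0)
    (a := (0:ℝ)) (b := 1) (bound := fun _ => C) (μ := volume) (s := ball t0 1) (ball_mem_nhds t0 one_pos)
    (Filter.Eventually.of_forall fun s =>
      (hFc.comp (continuous_id.prodMk continuous_const)).aestronglyMeasurable)
    ((hFc.comp (continuous_id.prodMk continuous_const)).intervalIntegrable 0 1)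
    ((hFtc.comp (continuous_id.prodMk continuous_const)).aestronglyMeasurable)
    (Filter.Eventually.of_forall ?_)
    ((continuous_const : Continuous fun _ : ℝ => C).intervalIntegrable 0 1)
    (Filter.Eventually.of_forall ?_)
  · exact main.2
  · intro x hx s hs
    have hx' : x ∈ Icc (0:ℝ) 1 := by
      rw [Set.uIoc_of_le (by norm_num : (0:ℝ) ≤ 1)] at hx
      exact ⟨le_of_lt hx.1, hx.2⟩
    have hs' : s ∈ Icc (t0 - 1) (t0 + 1) := by
      have := mem_ball_iff_norm.mp hs
      rw [Real.norm_eq_abs, abs_lt] at this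
      constructor <;> linarith [this.1, this.2]
    exact hC (x, s) (Set.mk_mem_prod hx' hs')
  · intro x _ s _
    exact hasDerivAt_slice_t hF x s

/-- If `g` is (for fixed `t`) the `x`-derivative of a periodic smooth function, its
integral over a period vanishes. -/
lemma integral_slice_deriv_zero {G : ℝ × ℝ → ℝ} (hG : ContDiff ℝ (⊤ : ℕ∞) G) (hpG : Per G)
    {g : ℝ → ℝ} (hg : Continuous g) (t : ℝ)
    (h : ∀ x : ℝ, HasDerivAt (fun y => G (y, t)) (g x) x) :
    ∫ x in (0:ℝ)..1, g x = 0 := by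
  rw [intervalIntegral.integral_eq_sub_of_hasDerivAt (fun x _ => h x)
    (hg.intervalIntegrable 0 1)]
  have : (1:ℝ) = 0 + 1 := by ring
  rw [this, hpG 0 t]
  ring

lemma const_of_deriv_zero {g : ℝ → ℝ} (hg : Continuous g)
    (hd : ∀ t : ℝ, 0 ≤ t → HasDerivAt g 0 t) : ∀ t : ℝ, 0 ≤ t → g t = g 0 := by
  intro t ht
  exact constant_of_has_deriv_right_zero (a := 0) (b := t) hg.continuousOn
    (fun s hs => (hd s hs.1).hasDerivWithinAt) t ⟨ht, le_rfl⟩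
variable {f : ℝ × ℝ → ℝ}

lemma hasDerivAt_uk (hf : ContDiff ℝ (⊤ : ℕ∞) f) (k : ℕ) (x t : ℝ) :
    HasDerivAt (fun y => dx^[k] f (y, t)) (dx^[k + 1] f (x, t)) x := by
  rw [Function.iterate_succ_apply']
  exact hasDerivAt_slice_x (contDiff_dx_iter hf k) x t

/-- `Q` with `u_t = ∂ₓ Q`. -/
noncomputable def QQ (f : ℝ × ℝ → ℝ) : ℝ × ℝ → ℝ :=
  fun p => -(f p) ^ 2 / 2 - dx^[2] f p + dx^[4] f p

/-- `∂ₓ Q` (the right-hand side of the Kawahara equation). -/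
noncomputable def Q1 (f : ℝ × ℝ → ℝ) : ℝ × ℝ → ℝ :=
  fun p => -(f p * dx f p) - dx^[3] f p + dx^[5] f p

noncomputable def Q2 (f : ℝ × ℝ → ℝ) : ℝ × ℝ → ℝ :=
  fun p => -(dx f p * dx f p + f p * dx^[2] f p) - dx^[4] f p + dx^[6] f p

noncomputable def Q3 (f : ℝ × ℝ → ℝ) : ℝ × ℝ → ℝ :=
  fun p => -(3 * dx f p * dx^[2] f p + f p * dx^[3] f p) - dx^[5] f p + dx^[7] f p

lemma contDiff_uk (hf : ContDiff ℝ (⊤ : ℕ∞) f) (k : ℕ) : ContDiff ℝ (⊤ : ℕ∞) (dx^[k] f) :=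
  contDiff_dx_iter hf k

lemma contDiff_QQ (hf : ContDiff ℝ (⊤ : ℕ∞) f) : ContDiff ℝ (⊤ : ℕ∞) (QQ f) :=
  (((hf.pow 2).neg.div_const 2).sub (contDiff_uk hf 2)).add (contDiff_uk hf 4)

lemma contDiff_Q1 (hf : ContDiff ℝ (⊤ : ℕ∞) f) : ContDiff ℝ (⊤ : ℕ∞) (Q1 f) :=
  (((hf.mul (contDiff_dx hf)).neg).sub (contDiff_uk hf 3)).add (contDiff_uk hf 5)

lemma contDiff_Q2 (hf : ContDiff ℝ (⊤ : ℕ∞) f) : ContDiff ℝ (⊤ : ℕ∞) (Q2 f) :=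
  ((((contDiff_dx hf).mul (contDiff_dx hf)).add (hf.mul (contDiff_uk hf 2))).neg.sub
    (contDiff_uk hf 4)).add (contDiff_uk hf 6)

lemma contDiff_Q3 (hf : ContDiff ℝ (⊤ : ℕ∞) f) : ContDiff ℝ (⊤ : ℕ∞) (Q3 f) :=
  (((((contDiff_const.mul (contDiff_dx hf)).mul (contDiff_uk hf 2)).add
    (hf.mul (contDiff_uk hf 3))).neg).sub (contDiff_uk hf 5)).add (contDiff_uk hf 7)

lemma u1_eq (x t : ℝ) : dx^[1] f (x, t) = dx f (x, t) := by
  rw [Function.iterate_one]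

lemma hasDerivAt_u0 (hf : ContDiff ℝ (⊤ : ℕ∞) f) (x t : ℝ) :
    HasDerivAt (fun y => f (y, t)) (dx f (x, t)) x := hasDerivAt_slice_x hf x t

lemma hasDerivAt_u1 (hf : ContDiff ℝ (⊤ : ℕ∞) f) (x t : ℝ) :
    HasDerivAt (fun y => dx f (y, t)) (dx^[2] f (x, t)) x := by
  have := hasDerivAt_uk hf 1 x t
  simpa [Function.iterate_one] using this

lemma hasDerivAt_QQ (hf : ContDiff ℝ (⊤ : ℕ∞) f) (x t : ℝ) :
    HasDerivAt (fun y => QQ f (y, t)) (Q1 f (x, t)) x := by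
  have h0 := hasDerivAt_u0 hf x t
  have h2 := hasDerivAt_uk hf 2 x t
  have h4 := hasDerivAt_uk hf 4 x t
  have H := (((h0.pow 2).neg.div_const 2).sub h2).add h4
  have H' : HasDerivAt (fun y => QQ f (y, t)) _ x := H
  convert H' using 1
  all_goals simp only [Q1, QQ, Q1, Q2, Q3]
  all_goals try norm_num
  all_goals try ring

lemma hasDerivAt_Q1 (hf : ContDiff ℝ (⊤ : ℕ∞) f) (x t : ℝ) :
    HasDerivAt (fun y => Q1 f (y, t)) (Q2 f (x, t)) x := by
  have h0 := hasDerivAt_u0 hf x t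
  have h1 := hasDerivAt_u1 hf x t
  have h3 := hasDerivAt_uk hf 3 x t
  have h5 := hasDerivAt_uk hf 5 x t
  have H := (((h0.mul h1).neg.sub h3).add h5)
  have H' : HasDerivAt (fun y => Q1 f (y, t)) _ x := H
  convert H' using 1
  all_goals simp only [Q2, QQ, Q1, Q2, Q3]
  all_goals try norm_num
  all_goals try ring

lemma hasDerivAt_Q2 (hf : ContDiff ℝ (⊤ : ℕ∞) f) (x t : ℝ) :
    HasDerivAt (fun y => Q2 f (y, t)) (Q3 f (x, t)) x := by
  have h0 := hasDerivAt_u0 hf x t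
  have h1 := hasDerivAt_u1 hf x t
  have h2 := hasDerivAt_uk hf 2 x t
  have h3 := hasDerivAt_uk hf 3 x t
  have h4 := hasDerivAt_uk hf 4 x t
  have h6 := hasDerivAt_uk hf 6 x t
  have H := ((((h1.mul h1).add (h0.mul h2)).neg.sub h4).add h6)
  have H' : HasDerivAt (fun y => Q2 f (y, t)) _ x := H
  convert H' using 1
  all_goals simp only [Q3, QQ, Q1, Q2, Q3]
  all_goals try norm_num
  all_goals try ring

/-- Antiderivative for the `L²` conservation law: `dx G2 = f * Q1`. -/
noncomputable def G2 (f : ℝ × ℝ → ℝ) : ℝ × ℝ → ℝ :=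
  fun p => f p * QQ f p + (f p) ^ 3 / 6 + (dx f p) ^ 2 / 2 - dx f p * dx^[3] f p
    + (dx^[2] f p) ^ 2 / 2

lemma contDiff_G2 (hf : ContDiff ℝ (⊤ : ℕ∞) f) : ContDiff ℝ (⊤ : ℕ∞) (G2 f) :=
  ((((hf.mul (contDiff_QQ hf)).add ((hf.pow 3).div_const 6)).add
    (((contDiff_dx hf).pow 2).div_const 2)).sub
    ((contDiff_dx hf).mul (contDiff_uk hf 3))).add (((contDiff_uk hf 2).pow 2).div_const 2)

lemma hasDerivAt_G2 (hf : ContDiff ℝ (⊤ : ℕ∞) f) (x t : ℝ) :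
    HasDerivAt (fun y => G2 f (y, t)) (f (x, t) * Q1 f (x, t)) x := by
  have h0 := hasDerivAt_u0 hf x t
  have h1 := hasDerivAt_u1 hf x t
  have h2 := hasDerivAt_uk hf 2 x t
  have h3 := hasDerivAt_uk hf 3 x t
  have h4 := hasDerivAt_uk hf 4 x t
  have hQ := hasDerivAt_QQ hf x t
  have H := ((((h0.mul hQ).add ((h0.pow 3).div_const 6)).add
    ((h1.pow 2).div_const 2)).sub (h1.mul h3)).add ((h2.pow 2).div_const 2)
  have H' : HasDerivAt (fun y => G2 f (y, t)) _ x := H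
  convert H' using 1
  all_goals simp only [QQ, Q1, QQ, Q1, Q2, Q3]
  all_goals try norm_num
  all_goals try ring

/-- Antiderivative for the Hamiltonian conservation law. -/
noncomputable def G3 (f : ℝ × ℝ → ℝ) : ℝ × ℝ → ℝ :=
  fun p => (QQ f p) ^ 2 / 2 + dx f p * Q1 f p + dx^[2] f p * Q2 f p - dx^[3] f p * Q1 f p

lemma contDiff_G3 (hf : ContDiff ℝ (⊤ : ℕ∞) f) : ContDiff ℝ (⊤ : ℕ∞) (G3 f) :=
  ((((contDiff_QQ hf).pow 2).div_const 2).add ((contDiff_dx hf).mul (contDiff_Q1 hf))).add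
    ((contDiff_uk hf 2).mul (contDiff_Q2 hf)) |>.sub ((contDiff_uk hf 3).mul (contDiff_Q1 hf))

lemma hasDerivAt_G3 (hf : ContDiff ℝ (⊤ : ℕ∞) f) (x t : ℝ) :
    HasDerivAt (fun y => G3 f (y, t))
      (-(f (x, t)) ^ 2 / 2 * Q1 f (x, t) + dx f (x, t) * Q2 f (x, t)
        + dx^[2] f (x, t) * Q3 f (x, t)) x := by
  have h1 := hasDerivAt_u1 hf x t
  have h2 := hasDerivAt_uk hf 2 x t
  have h3 := hasDerivAt_uk hf 3 x t
  have h4 := hasDerivAt_uk hf 4 x t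
  have hQ := hasDerivAt_QQ hf x t
  have hQ1 := hasDerivAt_Q1 hf x t
  have hQ2 := hasDerivAt_Q2 hf x t
  have H := (((hQ.pow 2).div_const 2).add (h1.mul hQ1)).add (h2.mul hQ2) |>.sub (h3.mul hQ1)
  have H' : HasDerivAt (fun y => G3 f (y, t)) _ x := H
  convert H' using 1
  all_goals simp only [QQ, QQ, Q1, Q2, Q3]
  all_goals try norm_num
  all_goals try ring
lemma per_uk (hf : ContDiff ℝ (⊤ : ℕ∞) f) (hp : Per f) (k : ℕ) : Per (dx^[k] f) :=
  Per.dx_iter hf hp k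

lemma per_QQ (hf : ContDiff ℝ (⊤ : ℕ∞) f) (hp : Per f) : Per (QQ f) := by
  intro x t
  simp only [QQ]
  rw [hp x t, per_uk hf hp 2 x t, per_uk hf hp 4 x t]

lemma per_Q1 (hf : ContDiff ℝ (⊤ : ℕ∞) f) (hp : Per f) : Per (Q1 f) := by
  intro x t
  simp only [Q1]
  rw [hp x t, Per.dx' hf hp x t, per_uk hf hp 3 x t, per_uk hf hp 5 x t]

lemma per_Q2 (hf : ContDiff ℝ (⊤ : ℕ∞) f) (hp : Per f) : Per (Q2 f) := by
  intro x t
  simp only [Q2]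
  rw [hp x t, Per.dx' hf hp x t, per_uk hf hp 2 x t, per_uk hf hp 4 x t,
    per_uk hf hp 6 x t]

lemma per_G2 (hf : ContDiff ℝ (⊤ : ℕ∞) f) (hp : Per f) : Per (G2 f) := by
  intro x t
  simp only [G2]
  rw [hp x t, per_QQ hf hp x t, Per.dx' hf hp x t, per_uk hf hp 3 x t,
    per_uk hf hp 2 x t]

lemma per_G3 (hf : ContDiff ℝ (⊤ : ℕ∞) f) (hp : Per f) : Per (G3 f) := by
  intro x t
  simp only [G3]
  rw [per_QQ hf hp x t, Per.dx' hf hp x t, per_Q1 hf hp x t, per_uk hf hp 2 x t,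
    per_Q2 hf hp x t, per_uk hf hp 3 x t]

lemma dt_comm1 (hf : ContDiff ℝ (⊤ : ℕ∞) f) : dt (dx f) = dx (dt f) :=
  funext fun p => (dx_dt_comm hf p).symm

lemma dx2_eq : dx^[2] f = dx (dx f) := by
  rw [show (2:ℕ) = 1 + 1 from rfl, Function.iterate_succ_apply', Function.iterate_one]

lemma dt_comm2 (hf : ContDiff ℝ (⊤ : ℕ∞) f) : dt (dx^[2] f) = dx (dx (dt f)) := by
  rw [dx2_eq]
  funext p
  calc dt (dx (dx f)) p = dx (dt (dx f)) p := (dx_dt_comm (contDiff_dx hf) p).symm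
    _ = dx (dx (dt f)) p := by rw [dt_comm1 hf]

lemma slice_Q2 (hf : ContDiff ℝ (⊤ : ℕ∞) f)
    (hQ1 : ∀ x t : ℝ, 0 ≤ t → dt f (x, t) = Q1 f (x, t)) {t : ℝ} (ht : 0 ≤ t) :
    ∀ x : ℝ, dx (dt f) (x, t) = Q2 f (x, t) := by
  intro x
  rw [← deriv_slice_x (contDiff_dt hf) x t]
  have h : (fun y => dt f (y, t)) = fun y => Q1 f (y, t) := funext fun y => hQ1 y t ht
  rw [h, (hasDerivAt_Q1 hf x t).deriv]

lemma slice_Q3 (hf : ContDiff ℝ (⊤ : ℕ∞) f)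
    (hQ1 : ∀ x t : ℝ, 0 ≤ t → dt f (x, t) = Q1 f (x, t)) {t : ℝ} (ht : 0 ≤ t) :
    ∀ x : ℝ, dx (dx (dt f)) (x, t) = Q3 f (x, t) := by
  intro x
  rw [← deriv_slice_x (contDiff_dx (contDiff_dt hf)) x t]
  have h : (fun y => dx (dt f) (y, t)) = fun y => Q2 f (y, t) :=
    funext fun y => slice_Q2 hf hQ1 ht y
  rw [h, (hasDerivAt_Q2 hf x t).deriv]

lemma dt_sq (hf : ContDiff ℝ (⊤ : ℕ∞) f) (x t : ℝ) :
    dt (fun p => (f p) ^ 2) (x, t) = 2 * f (x, t) * dt f (x, t) := by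
  have h2 : HasDerivAt (fun s => (f (x, s)) ^ 2) (2 * f (x, t) * dt f (x, t)) t := by
    have : HasDerivAt (fun s => (f (x, s)) ^ 2) _ t := (hasDerivAt_slice_t hf x t).fun_pow 2
    convert this using 1
    norm_num
  exact (hasDerivAt_slice_t (f := fun p => (f p) ^ 2) (hf.pow 2) x t).unique h2

noncomputable def F3 (f : ℝ × ℝ → ℝ) : ℝ × ℝ → ℝ :=
  fun p => -(f p) ^ 3 / 6 + (dx f p) ^ 2 / 2 + (dx^[2] f p) ^ 2 / 2

lemma contDiff_F3 (hf : ContDiff ℝ (⊤ : ℕ∞) f) : ContDiff ℝ (⊤ : ℕ∞) (F3 f) :=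
  (((hf.pow 3).neg.div_const 6).add (((contDiff_dx hf).pow 2).div_const 2)).add
    (((contDiff_uk hf 2).pow 2).div_const 2)

lemma dt_F3 (hf : ContDiff ℝ (⊤ : ℕ∞) f) (x t : ℝ) :
    dt (F3 f) (x, t) = -(f (x, t)) ^ 2 / 2 * dt f (x, t)
      + dx f (x, t) * dt (dx f) (x, t) + dx^[2] f (x, t) * dt (dx^[2] f) (x, t) := by
  have h2 : HasDerivAt (fun s => F3 f (x, s))
      (-(f (x, t)) ^ 2 / 2 * dt f (x, t) + dx f (x, t) * dt (dx f) (x, t)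
        + dx^[2] f (x, t) * dt (dx^[2] f) (x, t)) t := by
    have h := ((((hasDerivAt_slice_t hf x t).pow 3).neg.div_const 6).add
      (((hasDerivAt_slice_t (contDiff_dx hf) x t).pow 2).div_const 2)).add
      (((hasDerivAt_slice_t (contDiff_uk hf 2) x t).pow 2).div_const 2)
    have h' : HasDerivAt (fun s => F3 f (x, s)) _ t := h
    convert h' using 1
    norm_num
    ring
  exact (hasDerivAt_slice_t (contDiff_F3 hf) x t).unique h2

section Conservation

variable (hf : ContDiff ℝ (⊤ : ℕ∞) f) (hp : Per f)
  (hQ1 : ∀ x t : ℝ, 0 ≤ t → dt f (x, t) = Q1 f (x, t))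

include hf hp hQ1 in
lemma cons_m : ∀ t : ℝ, 0 ≤ t →
    ∫ x in (0:ℝ)..1, f (x, t) = ∫ x in (0:ℝ)..1, f (x, 0) := by
  apply const_of_deriv_zero
  · have hdiff : Differentiable ℝ _ := fun s => (hasDerivAt_param_integral hf s).differentiableAt
    exact hdiff.continuous
  · intro t ht
    have h := hasDerivAt_param_integral hf t
    have hz : ∫ x in (0:ℝ)..1, dt f (x, t) = 0 := by
      rw [intervalIntegral.integral_congr (g := fun x => Q1 f (x, t))
        (fun x _ => hQ1 x t ht)]
      have hcont : Continuous fun x => Q1 f (x, t) :=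
        (contDiff_Q1 hf).continuous.comp (continuous_id.prodMk continuous_const)
      exact integral_slice_deriv_zero (contDiff_QQ hf) (per_QQ hf hp) hcont t
        (fun x => hasDerivAt_QQ hf x t)
    rwa [hz] at h

include hf hp hQ1 in
lemma cons_A : ∀ t : ℝ, 0 ≤ t →
    ∫ x in (0:ℝ)..1, (f (x, t)) ^ 2 = ∫ x in (0:ℝ)..1, (f (x, 0)) ^ 2 := by
  apply const_of_deriv_zero
  · have hdiff : Differentiable ℝ _ := fun s => (hasDerivAt_param_integral (hf.pow 2) s).differentiableAt
    exact hdiff.continuous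
  · intro t ht
    have h := hasDerivAt_param_integral (hf.pow 2) t
    have hz : ∫ x in (0:ℝ)..1, dt (fun p => (f p) ^ 2) (x, t) = 0 := by
      rw [intervalIntegral.integral_congr (g := fun x => 2 * (f (x, t) * Q1 f (x, t)))
        (fun x _ => by rw [dt_sq hf x t, hQ1 x t ht]; ring)]
      rw [intervalIntegral.integral_const_mul]
      have hcont : Continuous fun x => f (x, t) * Q1 f (x, t) :=
        (hf.continuous.comp (continuous_id.prodMk continuous_const)).mul
          ((contDiff_Q1 hf).continuous.comp (continuous_id.prodMk continuous_const))
      have hz2 := integral_slice_deriv_zero (contDiff_G2 hf) (per_G2 hf hp) hcont t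
        (fun x => hasDerivAt_G2 hf x t)
      rw [hz2]
      ring
    rwa [hz] at h

include hf hp hQ1 in
lemma cons_H : ∀ t : ℝ, 0 ≤ t →
    ∫ x in (0:ℝ)..1, F3 f (x, t) = ∫ x in (0:ℝ)..1, F3 f (x, 0) := by
  apply const_of_deriv_zero
  · have hdiff : Differentiable ℝ _ := fun s => (hasDerivAt_param_integral (contDiff_F3 hf) s).differentiableAt
    exact hdiff.continuous
  · intro t ht
    have h := hasDerivAt_param_integral (contDiff_F3 hf) t
    have hz : ∫ x in (0:ℝ)..1, dt (F3 f) (x, t) = 0 := by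
      rw [intervalIntegral.integral_congr
        (g := fun x => -(f (x, t)) ^ 2 / 2 * Q1 f (x, t) + dx f (x, t) * Q2 f (x, t)
          + dx^[2] f (x, t) * Q3 f (x, t))
        (fun x _ => by
          rw [dt_F3 hf x t, dt_comm1 hf, dt_comm2 hf, hQ1 x t ht,
            slice_Q2 hf hQ1 ht x, slice_Q3 hf hQ1 ht x])]
      have c0 : Continuous fun x : ℝ => (x, t) := continuous_id.prodMk continuous_const
      have hcont : Continuous fun x => -(f (x, t)) ^ 2 / 2 * Q1 f (x, t)
          + dx f (x, t) * Q2 f (x, t) + dx^[2] f (x, t) * Q3 f (x, t) :=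
        (((((hf.continuous.comp c0).pow 2).neg.div_const 2).mul
          ((contDiff_Q1 hf).continuous.comp c0)).add
          (((contDiff_dx hf).continuous.comp c0).mul
            ((contDiff_Q2 hf).continuous.comp c0))).add
          (((contDiff_uk hf 2).continuous.comp c0).mul
            ((contDiff_Q3 hf).continuous.comp c0))
      exact integral_slice_deriv_zero (contDiff_G3 hf) (per_G3 hf hp) hcont t
        (fun x => hasDerivAt_G3 hf x t)
    rwa [hz] at h

end Conservation
/-- The purely one-dimensional elliptic estimate at a fixed time. -/
lemma oneD {v0 v1 v2 : ℝ → ℝ} {m0 A0 H0 : ℝ}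
    (h0 : Continuous v0) (hc1 : Continuous v1) (hc2 : Continuous v2)
    (hd0 : ∀ x, HasDerivAt v0 (v1 x) x) (hd1 : ∀ x, HasDerivAt v1 (v2 x) x)
    (hper0 : ∀ x, v0 (x + 1) = v0 x) (hper1 : ∀ x, v1 (x + 1) = v1 x)
    (hm : ∫ x in (0:ℝ)..1, v0 x = m0)
    (hA : ∫ x in (0:ℝ)..1, (v0 x) ^ 2 = A0)
    (hH : ∫ x in (0:ℝ)..1, (-(v0 x) ^ 3 / 6 + (v1 x) ^ 2 / 2 + (v2 x) ^ 2 / 2) = H0) :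
    ∀ x : ℝ, |v1 x| ≤
      (1 + 2 * (2 * H0 + A0 * |m0| / 3 + A0 / 6 + A0 ^ 2 * (A0 + 1) / 72)) / 2 := by
  obtain ⟨X, hXdef⟩ : ∃ X, ∫ x in (0:ℝ)..1, (v1 x) ^ 2 = X := ⟨_, rfl⟩
  obtain ⟨Y, hYdef⟩ : ∃ Y, ∫ x in (0:ℝ)..1, (v2 x) ^ 2 = Y := ⟨_, rfl⟩
  have hX0 : 0 ≤ X := hXdef ▸ intervalIntegral.integral_nonneg (by norm_num)
    (fun u _ => sq_nonneg _)
  have hY0 : 0 ≤ Y := hYdef ▸ intervalIntegral.integral_nonneg (by norm_num)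
    (fun u _ => sq_nonneg _)
  have hA0 : 0 ≤ A0 := hA ▸ intervalIntegral.integral_nonneg (by norm_num)
    (fun u _ => sq_nonneg _)
  -- fundamental-theorem bound through one period
  have hsub : ∀ (G g : ℝ → ℝ), Continuous g → (∀ x, HasDerivAt G (g x) x) →
      ∀ c x : ℝ, c ∈ Icc (0:ℝ) 1 → x ∈ Icc (0:ℝ) 1 →
      |G x - G c| ≤ ∫ y in (0:ℝ)..1, |g y| := by
    intro G g hg hdG c x hc hx
    have hftc : ∫ y in c..x, g y = G x - G c :=
      intervalIntegral.integral_eq_sub_of_hasDerivAt (fun y _ => hdG y)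
        (hg.intervalIntegrable c x)
    rw [← hftc]
    have h1 : |∫ y in c..x, g y| ≤ ∫ y in Set.uIoc c x, |g y| := by
      simpa [Real.norm_eq_abs] using
        intervalIntegral.norm_integral_le_integral_norm_uIoc (f := g) (a := c) (b := x)
          (μ := volume)
    refine h1.trans ?_
    have h2 : ∫ y in Set.uIoc c x, |g y| ≤ ∫ y in Set.Ioc (0:ℝ) 1, |g y| := by
      refine MeasureTheory.setIntegral_mono_set (hg.abs.integrableOn_Ioc)
        (Filter.Eventually.of_forall fun y => abs_nonneg _) ?_
      refine (Set.Ioc_subset_Ioc (le_inf hc.1 hx.1) (sup_le hc.2 hx.2)).eventuallyLE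
    refine h2.trans ?_
    rw [← intervalIntegral.integral_of_le (by norm_num : (0:ℝ) ≤ 1)]
  -- `∫ |g| ≤ (1 + ∫ g²)/2`
  have habs : ∀ g : ℝ → ℝ, Continuous g →
      ∫ y in (0:ℝ)..1, |g y| ≤ (1 + ∫ y in (0:ℝ)..1, (g y) ^ 2) / 2 := by
    intro g hg
    have h1 : ∫ y in (0:ℝ)..1, |g y| ≤ ∫ y in (0:ℝ)..1, (1 + (g y) ^ 2) / 2 := by
      apply intervalIntegral.integral_mono_on (by norm_num)
        (hg.abs.intervalIntegrable 0 1)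
        (((continuous_const.fun_add (hg.fun_pow 2)).div_const 2).intervalIntegrable 0 1)
      intro y _
      nlinarith [sq_nonneg (|g y| - 1), sq_abs (g y)]
    refine h1.trans_eq ?_
    rw [intervalIntegral.integral_div, intervalIntegral.integral_add
      (intervalIntegrable_const) ((hg.fun_pow 2).intervalIntegrable 0 1)]
    simp
  -- a point where `v1` vanishes
  obtain ⟨c1, hc1m, hc1v⟩ := exists_hasDerivAt_eq_slope v0 v1 (by norm_num : (0:ℝ) < 1)
    h0.continuousOn (fun x _ => hd0 x)
  have hv1c1 : v1 c1 = 0 := by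
    have e1 : v0 1 = v0 0 := by simpa using hper0 0
    rw [hc1v, e1]
    simp
  -- a point where `v0` equals its mean
  have hV : ∀ x : ℝ, HasDerivAt (fun y => ∫ s in (0:ℝ)..y, v0 s) (v0 x) x := fun x =>
    intervalIntegral.integral_hasDerivAt_right (h0.intervalIntegrable 0 x)
      (h0.stronglyMeasurableAtFilter volume (nhds x)) h0.continuousAt
  obtain ⟨c0, hc0m, hc0v⟩ := exists_hasDerivAt_eq_slope (fun y => ∫ s in (0:ℝ)..y, v0 s) v0
    (by norm_num : (0:ℝ) < 1)
    (by
      have hdiff : Differentiable ℝ (fun y => ∫ s in (0:ℝ)..y, v0 s) :=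
        fun x => (hV x).differentiableAt
      exact hdiff.continuous.continuousOn)
    (fun x _ => hV x)
  have hv0c0 : v0 c0 = m0 := by
    rw [hc0v]
    simp [intervalIntegral.integral_same, hm]
  -- pointwise bound on `v0`
  have hv0b : ∀ x ∈ Icc (0:ℝ) 1, |v0 x| ≤ |m0| + (1 + X) / 2 := by
    intro x hx
    have h1 := hsub v0 v1 hc1 hd0 c0 x ⟨hc0m.1.le, hc0m.2.le⟩ hx
    have h2 := habs v1 hc1
    rw [hXdef] at h2
    calc |v0 x| = |(v0 x - v0 c0) + v0 c0| := by ring_nf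
      _ ≤ |v0 x - v0 c0| + |v0 c0| := abs_add_le _ _
      _ ≤ |m0| + (1 + X) / 2 := by rw [hv0c0] at h1; rw [hv0c0]; linarith
  -- `X ≤ A0/(2d) + (d/2) Y` for every `d > 0`
  have key : ∀ d : ℝ, 0 < d → X ≤ A0 / (2 * d) + d / 2 * Y := by
    intro d hdpos
    have hzero : ∫ x in (0:ℝ)..1, (v1 x * v1 x + v0 x * v2 x) = 0 := by
      rw [intervalIntegral.integral_eq_sub_of_hasDerivAt
        (f := fun x => v0 x * v1 x) (f' := fun x => v1 x * v1 x + v0 x * v2 x)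
        (fun x _ => (hd0 x).mul (hd1 x))
        (((hc1.mul hc1).add (h0.mul hc2)).intervalIntegrable 0 1)]
      have e1 : v0 1 = v0 0 := by simpa using hper0 0
      have e2 : v1 1 = v1 0 := by simpa using hper1 0
      simp only [e1, e2]
      ring
    rw [intervalIntegral.integral_add ((hc1.fun_mul hc1).intervalIntegrable 0 1)
      ((h0.fun_mul hc2).intervalIntegrable 0 1)] at hzero
    have hXsq : (∫ x in (0:ℝ)..1, v1 x * v1 x) = X := by
      rw [← hXdef]; congr 1; funext x; ring
    have hXY : X = ∫ x in (0:ℝ)..1, -(v0 x * v2 x) := by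
      rw [intervalIntegral.integral_neg]
      linarith [hXsq ▸ hzero]
    have hmono : ∫ x in (0:ℝ)..1, -(v0 x * v2 x) ≤
        ∫ x in (0:ℝ)..1, ((v0 x) ^ 2 / (2 * d) + d / 2 * (v2 x) ^ 2) := by
      apply intervalIntegral.integral_mono_on (by norm_num)
        ((h0.fun_mul hc2).fun_neg.intervalIntegrable 0 1)
        ((((h0.fun_pow 2).div_const _).fun_add (continuous_const.fun_mul (hc2.fun_pow 2))).intervalIntegrable 0 1)
      intro x _
      have h := sq_nonneg (v0 x + d * v2 x)
      have h2 : -(v0 x * v2 x) ≤ ((v0 x) ^ 2 + d ^ 2 * (v2 x) ^ 2) / (2 * d) := by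
        rw [le_div_iff₀ (by positivity)]
        nlinarith
      have e : ((v0 x) ^ 2 + d ^ 2 * (v2 x) ^ 2) / (2 * d)
          = (v0 x) ^ 2 / (2 * d) + d / 2 * (v2 x) ^ 2 := by
        field_simp
      linarith [e ▸ h2]
    rw [intervalIntegral.integral_add (((h0.fun_pow 2).div_const _).intervalIntegrable 0 1)
      ((continuous_const.fun_mul (hc2.fun_pow 2)).intervalIntegrable 0 1),
      intervalIntegral.integral_div, intervalIntegral.integral_const_mul, hA, hYdef] at hmono
    linarith [hXY ▸ hmono]
  -- Hamiltonian splitting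
  have hHsplit : X / 2 + Y / 2 = H0 + (∫ x in (0:ℝ)..1, (v0 x) ^ 3) / 6 := by
    rw [intervalIntegral.integral_add
        ((((h0.fun_pow 3).fun_neg.div_const 6).fun_add ((hc1.fun_pow 2).div_const 2)).intervalIntegrable 0 1)
        (((hc2.fun_pow 2).div_const 2).intervalIntegrable 0 1),
      intervalIntegral.integral_add (((h0.fun_pow 3).fun_neg.div_const 6).intervalIntegrable 0 1)
        (((hc1.fun_pow 2).div_const 2).intervalIntegrable 0 1),
      intervalIntegral.integral_div, intervalIntegral.integral_div,
      intervalIntegral.integral_div, intervalIntegral.integral_neg, hXdef, hYdef] at hH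
    linarith
  -- cubic term bound
  have hcube : ∫ x in (0:ℝ)..1, (v0 x) ^ 3 ≤ (|m0| + (1 + X) / 2) * A0 := by
    have h1 : ∫ x in (0:ℝ)..1, (v0 x) ^ 3 ≤
        ∫ x in (0:ℝ)..1, (|m0| + (1 + X) / 2) * (v0 x) ^ 2 := by
      apply intervalIntegral.integral_mono_on (by norm_num)
        ((h0.fun_pow 3).intervalIntegrable 0 1)
        ((continuous_const.fun_mul (h0.fun_pow 2)).intervalIntegrable 0 1)
      intro x hx
      have hb := hv0b x hx
      nlinarith [mul_le_mul_of_nonneg_right ((le_abs_self (v0 x)).trans hb)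
        (sq_nonneg (v0 x))]
    rw [intervalIntegral.integral_const_mul, hA] at h1
    exact h1
  -- absorb and conclude the bound on `Y`
  have hA1 : (0:ℝ) < A0 + 1 := by linarith
  have e1 : X / 2 + Y / 2 ≤ H0 + (|m0| + (1 + X) / 2) * A0 / 6 := by
    rw [hHsplit]
    linarith
  have hXb := key (6 / (A0 + 1)) (by positivity)
  have eb1 : A0 / (2 * (6 / (A0 + 1))) = A0 * (A0 + 1) / 12 := by
    rw [show 2 * (6 / (A0 + 1)) = 12 / (A0 + 1) by ring, div_div_eq_mul_div]
  have eb2 : (6 / (A0 + 1)) / 2 * Y = 3 / (A0 + 1) * Y := by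
    field_simp
    ring
  rw [eb1, eb2] at hXb
  have key2 : A0 / 6 * X ≤ A0 / 6 * (A0 * (A0 + 1) / 12 + 3 / (A0 + 1) * Y) :=
    mul_le_mul_of_nonneg_left hXb (by positivity)
  have e2 : A0 / 6 * (3 / (A0 + 1) * Y) ≤ Y / 2 := by
    have h1 : A0 / (A0 + 1) ≤ 1 := (div_le_one hA1).mpr (by linarith)
    have e : A0 / 6 * (3 / (A0 + 1) * Y) = (A0 / (A0 + 1)) * (Y / 2) := by
      field_simp
      ring
    rw [e]
    calc (A0 / (A0 + 1)) * (Y / 2) ≤ 1 * (Y / 2) :=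
          mul_le_mul_of_nonneg_right h1 (by positivity)
      _ = Y / 2 := one_mul _
  have hfin : Y ≤ 2 * (2 * H0 + A0 * |m0| / 3 + A0 / 6 + A0 ^ 2 * (A0 + 1) / 72) := by
    nlinarith [hX0, hY0, hA0, e1, key2, e2, abs_nonneg m0]
  -- conclude the pointwise bound
  have hint2 : ∫ y in (0:ℝ)..1, |v2 y| ≤ (1 + Y) / 2 := by
    have := habs v2 hc2
    rwa [hYdef] at this
  have hbound01 : ∀ x ∈ Icc (0:ℝ) 1, |v1 x| ≤
      (1 + 2 * (2 * H0 + A0 * |m0| / 3 + A0 / 6 + A0 ^ 2 * (A0 + 1) / 72)) / 2 := by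
    intro x hx
    have h1 := hsub v1 v2 hc2 hd1 c1 x ⟨hc1m.1.le, hc1m.2.le⟩ hx
    rw [hv1c1, sub_zero] at h1
    linarith
  intro x
  have hpp : Function.Periodic v1 1 := hper1
  have hx' : v1 x = v1 (x - ⌊x⌋) := by
    have h := hpp.sub_int_mul_eq (x := x) ⌊x⌋
    simpa using h.symm
  rw [hx']
  apply hbound01
  constructor
  · linarith [Int.floor_le x]
  · linarith [Int.lt_floor_add_one x]

end Kaw

open Kaw

/-- Paper's Lemma 2.5, estimate (2.23): if `u` is a smooth solution of the Kawahara equation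
`u_t = −u u_x − u_{xxx} + u_{xxxxx}` on `ℝ × [0,∞)`, 1-periodic in `x`, then there is a
constant `α` (depending only on the initial data) with `|u_x(x,t)| ≤ α` for all `x` and
all `t ≥ 0`. -/
theorem kawahara_ux_uniform_bound (u : ℝ → ℝ → ℝ)
    (hsmooth : ContDiff ℝ (⊤ : ℕ∞) (Function.uncurry u))
    (hper : ∀ x t : ℝ, u (x + 1) t = u x t)
    (heq : ∀ x : ℝ, ∀ t : ℝ, 0 ≤ t →
      deriv (fun s => u x s) t =
        - u x t * deriv (fun y => u y t) x
        - iteratedDeriv 3 (fun y => u y t) x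
        + iteratedDeriv 5 (fun y => u y t) x) :
    ∃ α : ℝ, ∀ x : ℝ, ∀ t : ℝ, 0 ≤ t → |deriv (fun y => u y t) x| ≤ α := by
  have hf : ContDiff ℝ (⊤ : ℕ∞) (Function.uncurry u) := hsmooth
  have hp : Per (Function.uncurry u) := fun x t => hper x t
  have hQ1 : ∀ x t : ℝ, 0 ≤ t →
      dt (Function.uncurry u) (x, t) = Q1 (Function.uncurry u) (x, t) := by
    intro x t ht
    have h := heq x t ht
    have e1 : deriv (fun s => u x s) t = dt (Function.uncurry u) (x, t) :=
      (show HasDerivAt (fun s => u x s) (dt (Function.uncurry u) (x, t)) t from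
        hasDerivAt_slice_t hf x t).deriv
    have e2 : deriv (fun y => u y t) x = dx (Function.uncurry u) (x, t) :=
      (show HasDerivAt (fun y => u y t) (dx (Function.uncurry u) (x, t)) x from
        hasDerivAt_slice_x hf x t).deriv
    have e3 : iteratedDeriv 3 (fun y => u y t) x = dx^[3] (Function.uncurry u) (x, t) :=
      iteratedDeriv_slice hf 3 x t
    have e5 : iteratedDeriv 5 (fun y => u y t) x = dx^[5] (Function.uncurry u) (x, t) :=
      iteratedDeriv_slice hf 5 x t
    rw [e1, e2, e3, e5] at h
    rw [h]
    simp only [Q1, Function.uncurry_apply_pair]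
    ring
  have hmC := cons_m hf hp hQ1
  have hAC := cons_A hf hp hQ1
  have hHC := cons_H hf hp hQ1
  set m0 : ℝ := ∫ x in (0:ℝ)..1, Function.uncurry u (x, 0) with hm0
  set A0 : ℝ := ∫ x in (0:ℝ)..1, (Function.uncurry u (x, 0)) ^ 2 with hA0
  set H0 : ℝ := ∫ x in (0:ℝ)..1, F3 (Function.uncurry u) (x, 0) with hH0
  refine ⟨(1 + 2 * (2 * H0 + A0 * |m0| / 3 + A0 / 6 + A0 ^ 2 * (A0 + 1) / 72)) / 2, ?_⟩
  intro x t ht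
  have c0 : Continuous fun y : ℝ => (y, t) := continuous_id.prodMk continuous_const
  have hbd := oneD (v0 := fun y => Function.uncurry u (y, t))
    (v1 := fun y => dx (Function.uncurry u) (y, t))
    (v2 := fun y => dx^[2] (Function.uncurry u) (y, t))
    (hf.continuous.comp c0) ((contDiff_dx hf).continuous.comp c0)
    ((contDiff_uk hf 2).continuous.comp c0)
    (fun y => hasDerivAt_slice_x hf y t) (fun y => hasDerivAt_u1 hf y t)
    (fun y => hp y t) (fun y => Per.dx' hf hp y t)
    (hmC t ht) (hAC t ht) (hHC t ht) x
  have e2 : deriv (fun y => u y t) x = dx (Function.uncurry u) (x, t) :=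
    (show HasDerivAt (fun y => u y t) (dx (Function.uncurry u) (x, t)) x from
      hasDerivAt_slice_x hf x t).deriv
  rw [e2]
  exact hbd
end

section
/- Let u and v be two smooth solutions of the Kawahara equation u_t = −u u_x − u_{xxx} + u_{xxxxx} on ℝ × [0,T], each 1-periodic in x, with the same initial data: u(x,0) = v(x,0) for all x. Then u(x,t) = v(x,t) for all x ∈ ℝ and all t ∈ [0,T]. -/
open MeasureTheory intervalIntegral Real Set Function

noncomputable def pdx (f : ℝ × ℝ → ℝ) : ℝ × ℝ → ℝ := fun p => fderiv ℝ f p (1, 0)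
noncomputable def pdt (f : ℝ × ℝ → ℝ) : ℝ × ℝ → ℝ := fun p => fderiv ℝ f p (0, 1)

lemma pdx_contDiff {f : ℝ × ℝ → ℝ} (hf : ContDiff ℝ (⊤ : ℕ∞) f) : ContDiff ℝ (⊤ : ℕ∞) (pdx f) :=
  (hf.fderiv_right (by simp)).clm_apply contDiff_const

lemma pdt_contDiff {f : ℝ × ℝ → ℝ} (hf : ContDiff ℝ (⊤ : ℕ∞) f) : ContDiff ℝ (⊤ : ℕ∞) (pdt f) :=
  (hf.fderiv_right (by simp)).clm_apply contDiff_const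

lemma hasDerivAt_pdx {f : ℝ × ℝ → ℝ} (hf : ContDiff ℝ (⊤ : ℕ∞) f) (x t : ℝ) :
    HasDerivAt (fun y => f (y, t)) (pdx f (x, t)) x := by
  have h1 : HasFDerivAt f (fderiv ℝ f (x, t)) (x, t) :=
    (hf.differentiable (by simp) (x, t)).hasFDerivAt
  have h2 : HasDerivAt (fun y : ℝ => (y, t)) ((1 : ℝ), (0 : ℝ)) x :=
    (hasDerivAt_id x).prodMk (hasDerivAt_const x t)
  exact h1.comp_hasDerivAt x h2

lemma hasDerivAt_pdt {f : ℝ × ℝ → ℝ} (hf : ContDiff ℝ (⊤ : ℕ∞) f) (x t : ℝ) :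
    HasDerivAt (fun s => f (x, s)) (pdt f (x, t)) t := by
  have h1 : HasFDerivAt f (fderiv ℝ f (x, t)) (x, t) :=
    (hf.differentiable (by simp) (x, t)).hasFDerivAt
  have h2 : HasDerivAt (fun s : ℝ => (x, s)) ((0 : ℝ), (1 : ℝ)) t :=
    (hasDerivAt_const t x).prodMk (hasDerivAt_id t)
  exact h1.comp_hasDerivAt t h2

lemma pdx_iter_contDiff {f : ℝ × ℝ → ℝ} (hf : ContDiff ℝ (⊤ : ℕ∞) f) (n : ℕ) :
    ContDiff ℝ (⊤ : ℕ∞) (pdx^[n] f) := by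
  induction n with
  | zero => exact hf
  | succ n ih => rw [Function.iterate_succ_apply']; exact pdx_contDiff ih

lemma iteratedDeriv_eq_pdx {f : ℝ × ℝ → ℝ} (hf : ContDiff ℝ (⊤ : ℕ∞) f) (n : ℕ) (x t : ℝ) :
    iteratedDeriv n (fun y => f (y, t)) x = pdx^[n] f (x, t) := by
  induction n generalizing x with
  | zero => simp
  | succ n ih =>
    rw [iteratedDeriv_succ]
    have : (iteratedDeriv n fun y => f (y, t)) = fun y => pdx^[n] f (y, t) :=
      funext fun y => ih y
    rw [this, Function.iterate_succ_apply']
    exact (hasDerivAt_pdx (pdx_iter_contDiff hf n) x t).deriv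

lemma pdx_periodic {f : ℝ × ℝ → ℝ} (hf : ContDiff ℝ (⊤ : ℕ∞) f)
    (hp : ∀ x t : ℝ, f (x + 1, t) = f (x, t)) (x t : ℝ) :
    pdx f (x + 1, t) = pdx f (x, t) := by
  have key : HasFDerivAt f (fderiv ℝ f ((x, t) + (1, 0))) (x, t) := by
    have h := (hf.differentiable (by simp) ((x, t) + (1, 0))).hasFDerivAt
    have hc : HasFDerivAt (fun q : ℝ × ℝ => q + ((1 : ℝ), (0 : ℝ)))
        (ContinuousLinearMap.id ℝ (ℝ × ℝ)) (x, t) := (hasFDerivAt_id _).add_const _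
    have h2 := h.comp (x, t) hc
    have he : (f ∘ fun q : ℝ × ℝ => q + ((1:ℝ), (0:ℝ))) = f := by
      funext q; show f (q + (1, 0)) = f q; rw [show q + ((1:ℝ),(0:ℝ)) = (q.1 + 1, q.2) by simp [Prod.ext_iff]]; exact hp q.1 q.2
    rw [he] at h2; simpa using h2
  have : fderiv ℝ f (x + 1, t) = fderiv ℝ f (x, t) := by
    have := key.fderiv
    simpa [Prod.ext_iff] using this.symm
  simp [pdx, this]

lemma pdx_sub {f g : ℝ × ℝ → ℝ} (hf : ContDiff ℝ (⊤ : ℕ∞) f) (hg : ContDiff ℝ (⊤ : ℕ∞) g) (p : ℝ × ℝ) :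
    pdx (fun q => f q - g q) p = pdx f p - pdx g p := by
  simp [pdx, fderiv_fun_sub (hf.differentiable (by simp) p) (hg.differentiable (by simp) p)]

lemma pdx_add {f g : ℝ × ℝ → ℝ} (hf : ContDiff ℝ (⊤ : ℕ∞) f) (hg : ContDiff ℝ (⊤ : ℕ∞) g) (p : ℝ × ℝ) :
    pdx (fun q => f q + g q) p = pdx f p + pdx g p := by
  simp [pdx, fderiv_fun_add (hf.differentiable (by simp) p) (hg.differentiable (by simp) p)]

lemma pdx_mul {f g : ℝ × ℝ → ℝ} (hf : ContDiff ℝ (⊤ : ℕ∞) f) (hg : ContDiff ℝ (⊤ : ℕ∞) g) (p : ℝ × ℝ) :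
    pdx (fun q => f q * g q) p = pdx f p * g p + f p * pdx g p := by
  simp only [pdx, fderiv_fun_mul (hf.differentiable (by simp) p) (hg.differentiable (by simp) p),
    ContinuousLinearMap.add_apply, ContinuousLinearMap.coe_smul', Pi.smul_apply, smul_eq_mul]
  ring

lemma pdx_iter_sub {f g : ℝ × ℝ → ℝ} (hf : ContDiff ℝ (⊤ : ℕ∞) f) (hg : ContDiff ℝ (⊤ : ℕ∞) g) (n : ℕ)
    (p : ℝ × ℝ) : pdx^[n] (fun q => f q - g q) p = pdx^[n] f p - pdx^[n] g p := by
  induction n generalizing p with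
  | zero => simp
  | succ n ih =>
    rw [Function.iterate_succ_apply', Function.iterate_succ_apply', Function.iterate_succ_apply']
    have : pdx^[n] (fun q => f q - g q) = fun q => pdx^[n] f q - pdx^[n] g q := funext ih
    rw [this, pdx_sub (pdx_iter_contDiff hf n) (pdx_iter_contDiff hg n)]

lemma pdx_iter_periodic {f : ℝ × ℝ → ℝ} (hf : ContDiff ℝ (⊤ : ℕ∞) f)
    (hp : ∀ x t : ℝ, f (x + 1, t) = f (x, t)) (n : ℕ) (x t : ℝ) :
    pdx^[n] f (x + 1, t) = pdx^[n] f (x, t) := by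
  induction n generalizing x t with
  | zero => exact hp x t
  | succ n ih =>
    simp only [Function.iterate_succ_apply']
    exact pdx_periodic (pdx_iter_contDiff hf n) ih x t

lemma pdt_sub {f g : ℝ × ℝ → ℝ} (hf : ContDiff ℝ (⊤ : ℕ∞) f) (hg : ContDiff ℝ (⊤ : ℕ∞) g) (p : ℝ × ℝ) :
    pdt (fun q => f q - g q) p = pdt f p - pdt g p := by
  simp [pdt, fderiv_fun_sub (hf.differentiable (by simp) p) (hg.differentiable (by simp) p)]

/-- Uniqueness part of the paper's Theorem 1.1 (proved in Section 4): two smooth 1-periodic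
solutions of the Kawahara equation `u_t = −u u_x − u_{xxx} + u_{xxxxx}` on `ℝ × [0,T]` with
the same initial data coincide. -/
theorem kawahara_uniqueness (T : ℝ) (hT : 0 ≤ T) (u v : ℝ → ℝ → ℝ)
    (husmooth : ContDiff ℝ (⊤ : ℕ∞) (Function.uncurry u))
    (hvsmooth : ContDiff ℝ (⊤ : ℕ∞) (Function.uncurry v))
    (huper : ∀ x t : ℝ, u (x + 1) t = u x t)
    (hvper : ∀ x t : ℝ, v (x + 1) t = v x t)
    (hueq : ∀ x : ℝ, ∀ t ∈ Set.Icc (0 : ℝ) T,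
      deriv (fun s => u x s) t =
        - u x t * deriv (fun y => u y t) x
        - iteratedDeriv 3 (fun y => u y t) x
        + iteratedDeriv 5 (fun y => u y t) x)
    (hveq : ∀ x : ℝ, ∀ t ∈ Set.Icc (0 : ℝ) T,
      deriv (fun s => v x s) t =
        - v x t * deriv (fun y => v y t) x
        - iteratedDeriv 3 (fun y => v y t) x
        + iteratedDeriv 5 (fun y => v y t) x)
    (hinit : ∀ x : ℝ, u x 0 = v x 0) :
    ∀ x : ℝ, ∀ t ∈ Set.Icc (0 : ℝ) T, u x t = v x t := by
  set U : ℝ × ℝ → ℝ := Function.uncurry u with hUdef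
  set V : ℝ × ℝ → ℝ := Function.uncurry v with hVdef
  set W : ℝ × ℝ → ℝ := fun p => U p - V p with hWdef
  set A : ℝ × ℝ → ℝ := fun p => U p + V p with hAdef
  have hW : ContDiff ℝ (⊤ : ℕ∞) W := husmooth.sub hvsmooth
  have hA : ContDiff ℝ (⊤ : ℕ∞) A := husmooth.add hvsmooth
  have hWper : ∀ x t : ℝ, W (x + 1, t) = W (x, t) := by
    intro x t
    show U (x + 1, t) - V (x + 1, t) = U (x, t) - V (x, t)
    have h1 : U (x + 1, t) = U (x, t) := huper x t
    have h2 : V (x + 1, t) = V (x, t) := hvper x t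
    rw [h1, h2]
  have hAper : ∀ x t : ℝ, A (x + 1, t) = A (x, t) := by
    intro x t
    show U (x + 1, t) + V (x + 1, t) = U (x, t) + V (x, t)
    have h1 : U (x + 1, t) = U (x, t) := huper x t
    have h2 : V (x + 1, t) = V (x, t) := hvper x t
    rw [h1, h2]
  -- the PDE in terms of pdt / pdx
  have hU' : ∀ x : ℝ, ∀ t ∈ Set.Icc (0 : ℝ) T,
      pdt U (x, t) = -U (x, t) * pdx U (x, t) - pdx^[3] U (x, t) + pdx^[5] U (x, t) := by
    intro x t ht
    have e0 : deriv (fun s => u x s) t = pdt U (x, t) := (hasDerivAt_pdt husmooth x t).deriv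
    have e1 : deriv (fun y => u y t) x = pdx U (x, t) := (hasDerivAt_pdx husmooth x t).deriv
    have e3 : iteratedDeriv 3 (fun y => u y t) x = pdx^[3] U (x, t) :=
      iteratedDeriv_eq_pdx husmooth 3 x t
    have e5 : iteratedDeriv 5 (fun y => u y t) x = pdx^[5] U (x, t) :=
      iteratedDeriv_eq_pdx husmooth 5 x t
    have := hueq x t ht
    rw [e0, e1, e3, e5] at this
    exact this
  have hV' : ∀ x : ℝ, ∀ t ∈ Set.Icc (0 : ℝ) T,
      pdt V (x, t) = -V (x, t) * pdx V (x, t) - pdx^[3] V (x, t) + pdx^[5] V (x, t) := by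
    intro x t ht
    have e0 : deriv (fun s => v x s) t = pdt V (x, t) := (hasDerivAt_pdt hvsmooth x t).deriv
    have e1 : deriv (fun y => v y t) x = pdx V (x, t) := (hasDerivAt_pdx hvsmooth x t).deriv
    have e3 : iteratedDeriv 3 (fun y => v y t) x = pdx^[3] V (x, t) :=
      iteratedDeriv_eq_pdx hvsmooth 3 x t
    have e5 : iteratedDeriv 5 (fun y => v y t) x = pdx^[5] V (x, t) :=
      iteratedDeriv_eq_pdx hvsmooth 5 x t
    have := hveq x t ht
    rw [e0, e1, e3, e5] at this
    exact this
  -- equation for W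
  have htW : ∀ x : ℝ, ∀ t ∈ Set.Icc (0 : ℝ) T,
      pdt W (x, t) = -(pdx W (x, t) * A (x, t) + W (x, t) * pdx A (x, t)) / 2
        - pdx^[3] W (x, t) + pdx^[5] W (x, t) := by
    intro x t ht
    have h1 : pdt W (x, t) = pdt U (x, t) - pdt V (x, t) := pdt_sub husmooth hvsmooth (x, t)
    have h2 : pdx W (x, t) = pdx U (x, t) - pdx V (x, t) := pdx_sub husmooth hvsmooth (x, t)
    have h3 : pdx A (x, t) = pdx U (x, t) + pdx V (x, t) := pdx_add husmooth hvsmooth (x, t)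
    have h4 : pdx^[3] W (x, t) = pdx^[3] U (x, t) - pdx^[3] V (x, t) :=
      pdx_iter_sub husmooth hvsmooth 3 (x, t)
    have h5 : pdx^[5] W (x, t) = pdx^[5] U (x, t) - pdx^[5] V (x, t) :=
      pdx_iter_sub husmooth hvsmooth 5 (x, t)
    have hWv : W (x, t) = U (x, t) - V (x, t) := rfl
    have hAv : A (x, t) = U (x, t) + V (x, t) := rfl
    rw [h1, h2, h3, h4, h5, hWv, hAv, hU' x t ht, hV' x t ht]
    ring
  -- continuity helpers
  have cW : Continuous W := hW.continuous
  have cline : ∀ t : ℝ, Continuous fun x : ℝ => (x, t) :=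
    fun t => continuous_id.prodMk continuous_const
  have cWt : ∀ t : ℝ, Continuous fun x => W (x, t) := fun t => cW.comp (cline t)
  have cK : ∀ (k : ℕ) (t : ℝ), Continuous fun x => pdx^[k] W (x, t) :=
    fun k t => (pdx_iter_contDiff hW k).continuous.comp (cline t)
  have cAt : ∀ t : ℝ, Continuous fun x => A (x, t) := fun t => hA.continuous.comp (cline t)
  have cAx : ∀ t : ℝ, Continuous fun x => pdx A (x, t) :=
    fun t => (pdx_contDiff hA).continuous.comp (cline t)
  have cT : Continuous fun p => 2 * W p * pdt W p :=
    (continuous_const.mul cW).mul (pdt_contDiff hW).continuous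
  -- the energy
  set F : ℝ → ℝ := fun t => ∫ x in (0:ℝ)..1, W (x, t) ^ 2 with hFdef
  -- derivative of the energy
  have hFderiv : ∀ t₀ : ℝ,
      HasDerivAt F (∫ x in (0:ℝ)..1, 2 * W (x, t₀) * pdt W (x, t₀)) t₀ := by
    intro t₀
    obtain ⟨C, hC⟩ := ((isCompact_Icc (a := (0:ℝ)) (b := 1)).prod
      (isCompact_Icc (a := t₀ - 1) (b := t₀ + 1))).exists_bound_of_continuousOn
      cT.continuousOn
    have key := intervalIntegral.hasDerivAt_integral_of_dominated_loc_of_deriv_le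
      (μ := MeasureTheory.volume) (a := (0:ℝ)) (b := 1) (x₀ := t₀)
      (F := fun t x => W (x, t) ^ 2) (F' := fun t x => 2 * W (x, t) * pdt W (x, t))
      (bound := fun _ => C) (s := Metric.ball t₀ 1) (Metric.ball_mem_nhds t₀ one_pos)
      (Filter.Eventually.of_forall fun t => ((cWt t).pow 2).aestronglyMeasurable)
      (((cWt t₀).pow 2).intervalIntegrable 0 1)
      ((cT.comp (cline t₀)).aestronglyMeasurable)
      (Filter.Eventually.of_forall fun x => ?_)
      (intervalIntegrable_const)
      (Filter.Eventually.of_forall fun x => ?_)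
    · exact key.2
    · intro hx t ht
      apply hC (x, t)
      constructor
      · have : x ∈ Set.Ioc (0:ℝ) 1 := by
          rwa [Set.uIoc_of_le (zero_le_one)] at hx
        exact ⟨this.1.le, this.2⟩
      · rw [Metric.mem_ball, Real.dist_eq, abs_sub_lt_iff] at ht
        constructor <;> [linarith [ht.2]; linarith [ht.1]]
    · intro _ t _
      have h := (hasDerivAt_pdt hW x t).pow 2
      have e : (↑(2:ℕ) : ℝ) * W (x, t) ^ (2 - 1) * pdt W (x, t)
          = 2 * W (x, t) * pdt W (x, t) := by norm_num
      rwa [e] at h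
  -- energy inequality
  obtain ⟨M, hM⟩ := ((isCompact_Icc (a := (0:ℝ)) (b := 1)).prod
    (isCompact_Icc (a := (0:ℝ)) (b := T))).exists_bound_of_continuousOn
    (pdx_contDiff hA).continuous.continuousOn
  have hM0 : 0 ≤ M := le_trans (norm_nonneg _)
    (hM ((0:ℝ), (0:ℝ)) ⟨⟨le_refl _, zero_le_one⟩, ⟨le_refl _, hT⟩⟩)
  have hderivF : ∀ t ∈ Set.Icc (0:ℝ) T, deriv F t ≤ (M / 2) * F t := by
    intro t ht
    have hd := (hFderiv t).deriv
    rw [hd]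
    -- rewrite the integrand using the equation and the exact spatial derivative
    have hcongr : ∀ x : ℝ, 2 * W (x, t) * pdt W (x, t) =
        (-(W (x, t) * pdx W (x, t) * A (x, t)) - W (x, t) ^ 2 * pdx A (x, t) / 2
          - 2 * W (x, t) * pdx^[3] W (x, t) + 2 * W (x, t) * pdx^[5] W (x, t))
        - W (x, t) ^ 2 * pdx A (x, t) / 2 := by
      intro x
      rw [htW x t ht]
      ring
    have cD : Continuous fun x =>
        -(W (x, t) * pdx W (x, t) * A (x, t)) - W (x, t) ^ 2 * pdx A (x, t) / 2
          - 2 * W (x, t) * pdx^[3] W (x, t) + 2 * W (x, t) * pdx^[5] W (x, t) := by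
      have h1 : Continuous fun x => pdx W (x, t) := by
        have := cK 1 t
        simpa using this
      exact (((((cWt t).mul h1).mul (cAt t)).neg.sub
        ((((cWt t).pow 2).mul (cAx t)).div_const 2)).sub
        ((continuous_const.mul (cWt t)).mul (cK 3 t))).add
        ((continuous_const.mul (cWt t)).mul (cK 5 t))
    have cR : Continuous fun x => W (x, t) ^ 2 * pdx A (x, t) / 2 :=
      (((cWt t).pow 2).mul (cAx t)).div_const 2
    rw [intervalIntegral.integral_congr (g := fun x =>
        (-(W (x, t) * pdx W (x, t) * A (x, t)) - W (x, t) ^ 2 * pdx A (x, t) / 2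
          - 2 * W (x, t) * pdx^[3] W (x, t) + 2 * W (x, t) * pdx^[5] W (x, t))
        - W (x, t) ^ 2 * pdx A (x, t) / 2) (fun x _ => hcongr x)]
    rw [intervalIntegral.integral_sub (cD.intervalIntegrable 0 1) (cR.intervalIntegrable 0 1)]
    -- FTC : the first integral vanishes by periodicity
    have hgderiv : ∀ x : ℝ, HasDerivAt (fun y =>
        -(1/2) * (W (y, t) * W (y, t) * A (y, t)) - 2 * (W (y, t) * pdx^[2] W (y, t))
          + pdx W (y, t) * pdx W (y, t) + 2 * (W (y, t) * pdx^[4] W (y, t))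
          - 2 * (pdx W (y, t) * pdx^[3] W (y, t)) + pdx^[2] W (y, t) * pdx^[2] W (y, t))
        (-(W (x, t) * pdx W (x, t) * A (x, t)) - W (x, t) ^ 2 * pdx A (x, t) / 2
          - 2 * W (x, t) * pdx^[3] W (x, t) + 2 * W (x, t) * pdx^[5] W (x, t)) x := by
      intro x
      have hw : ∀ k : ℕ, HasDerivAt (fun y => pdx^[k] W (y, t)) (pdx^[k+1] W (x, t)) x := by
        intro k
        have h := hasDerivAt_pdx (pdx_iter_contDiff hW k) x t
        simpa only [Function.iterate_succ_apply'] using h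
      have hw0 : HasDerivAt (fun y => W (y, t)) (pdx W (x, t)) x := hasDerivAt_pdx hW x t
      have hw1 : HasDerivAt (fun y => pdx W (y, t)) (pdx^[2] W (x, t)) x := hw 1
      have hw2 : HasDerivAt (fun y => pdx^[2] W (y, t)) (pdx^[3] W (x, t)) x := hw 2
      have hw3 : HasDerivAt (fun y => pdx^[3] W (y, t)) (pdx^[4] W (x, t)) x := hw 3
      have hw4 : HasDerivAt (fun y => pdx^[4] W (y, t)) (pdx^[5] W (x, t)) x := hw 4
      have hA0 : HasDerivAt (fun y => A (y, t)) (pdx A (x, t)) x := hasDerivAt_pdx hA x t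
      have H := (((((((hw0.fun_mul hw0).fun_mul hA0).const_mul (-(1/2):ℝ)).fun_sub
        ((hw0.fun_mul hw2).const_mul (2:ℝ))).fun_add (hw1.fun_mul hw1)).fun_add
        ((hw0.fun_mul hw4).const_mul (2:ℝ))).fun_sub ((hw1.fun_mul hw3).const_mul (2:ℝ))).fun_add
        (hw2.fun_mul hw2)
      refine H.congr_deriv ?_
      ring
    have hFTCint : (∫ x in (0:ℝ)..1,
        (-(W (x, t) * pdx W (x, t) * A (x, t)) - W (x, t) ^ 2 * pdx A (x, t) / 2
          - 2 * W (x, t) * pdx^[3] W (x, t) + 2 * W (x, t) * pdx^[5] W (x, t))) = 0 := by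
      rw [intervalIntegral.integral_eq_sub_of_hasDerivAt (fun x _ => hgderiv x)
        (cD.intervalIntegrable 0 1)]
      have eW : W (1, t) = W (0, t) := by simpa using hWper 0 t
      have eA : A (1, t) = A (0, t) := by simpa using hAper 0 t
      have e1 : pdx W (1, t) = pdx W (0, t) := by
        simpa using pdx_iter_periodic hW hWper 1 0 t
      have e2 : pdx^[2] W (1, t) = pdx^[2] W (0, t) := by
        simpa using pdx_iter_periodic hW hWper 2 0 t
      have e3 : pdx^[3] W (1, t) = pdx^[3] W (0, t) := by
        simpa using pdx_iter_periodic hW hWper 3 0 t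
      have e4 : pdx^[4] W (1, t) = pdx^[4] W (0, t) := by
        simpa using pdx_iter_periodic hW hWper 4 0 t
      rw [eW, eA, e1, e2, e3, e4]
      ring
    rw [hFTCint, zero_sub, ← intervalIntegral.integral_neg]
    have hmono : (∫ x in (0:ℝ)..1, -(W (x, t) ^ 2 * pdx A (x, t) / 2))
        ≤ ∫ x in (0:ℝ)..1, M / 2 * W (x, t) ^ 2 := by
      apply intervalIntegral.integral_mono_on zero_le_one
        (cR.neg.intervalIntegrable 0 1)
        ((continuous_const.mul ((cWt t).pow 2)).intervalIntegrable 0 1)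
      intro x hx
      show -(W (x, t) ^ 2 * pdx A (x, t) / 2) ≤ M / 2 * W (x, t) ^ 2
      have hb := hM (x, t) ⟨hx, ht⟩
      rw [Real.norm_eq_abs] at hb
      have hb1 := (abs_le.mp hb).1
      have hb2 := (abs_le.mp hb).2
      nlinarith [sq_nonneg (W (x, t))]
    calc (∫ x in (0:ℝ)..1, -(W (x, t) ^ 2 * pdx A (x, t) / 2))
        ≤ ∫ x in (0:ℝ)..1, M / 2 * W (x, t) ^ 2 := hmono
      _ = M / 2 * F t := by rw [intervalIntegral.integral_const_mul]
  -- initial energy is zero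
  have hF0 : F 0 = 0 := by
    have hz : ∀ x : ℝ, W (x, 0) = 0 := by
      intro x
      show U (x, 0) - V (x, 0) = 0
      have : u x 0 = v x 0 := hinit x
      simp only [hUdef, hVdef, Function.uncurry]
      rw [this]; ring
    show (∫ x in (0:ℝ)..1, W (x, 0) ^ 2) = 0
    rw [intervalIntegral.integral_congr (g := fun _ => (0:ℝ)) (fun x _ => by rw [hz x]; ring)]
    simp
  have hFnonneg : ∀ t : ℝ, 0 ≤ F t :=
    fun t => intervalIntegral.integral_nonneg zero_le_one (fun x _ => sq_nonneg _)
  -- Gronwall-type argument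
  have hH : ∀ t : ℝ, HasDerivAt (fun s => F s * Real.exp (-(M/2) * s))
      ((deriv F t - (M/2) * F t) * Real.exp (-(M/2) * t)) t := by
    intro t
    have h1 : HasDerivAt F (deriv F t) t := (hFderiv t).differentiableAt.hasDerivAt
    have h2 : HasDerivAt (fun s : ℝ => Real.exp (-(M/2) * s))
        (Real.exp (-(M/2) * t) * (-(M/2) * 1)) t :=
      ((hasDerivAt_id t).const_mul (-(M/2))).exp
    refine (h1.fun_mul h2).congr_deriv ?_
    ring
  have hFzero : ∀ t ∈ Set.Icc (0:ℝ) T, F t = 0 := by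
    intro t ht
    have hanti : AntitoneOn (fun s => F s * Real.exp (-(M/2) * s)) (Set.Icc 0 T) := by
      apply antitoneOn_of_deriv_nonpos (convex_Icc 0 T)
      · exact fun s _ => ((hH s).differentiableAt).continuousAt.continuousWithinAt
      · exact fun s _ => ((hH s).differentiableAt).differentiableWithinAt
      · intro s hs
        rw [interior_Icc] at hs
        rw [(hH s).deriv]
        have hds := hderivF s ⟨hs.1.le, hs.2.le⟩
        apply mul_nonpos_of_nonpos_of_nonneg
        · linarith
        · exact (Real.exp_pos _).le
    have hle := hanti (Set.left_mem_Icc.mpr hT) ht ht.1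
    simp only [mul_zero, neg_zero, zero_mul, Real.exp_zero, mul_one] at hle
    rw [hF0] at hle
    nlinarith [Real.exp_pos (-(M/2) * t), hFnonneg t]
  -- conclusion
  intro x t ht
  have hWz : W (x, t) = 0 := by
    by_contra hne
    have hper1 : Function.Periodic (fun y => W (y, t) ^ 2) 1 := by
      intro y; simp [hWper y t]
    have hshift : (∫ y in x..(x+1), W (y, t) ^ 2) = F t := by
      have := hper1.intervalIntegral_add_eq x 0
      simpa using this
    have hpos : 0 < W (x, t) ^ 2 := by positivity
    have hcont : Continuous fun y => W (y, t) ^ 2 := (cWt t).pow 2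
    obtain ⟨ε, hε, hball⟩ := Metric.continuousAt_iff.mp hcont.continuousAt _ hpos
    have hsubset : Set.Ioo x (x + min ε 1) ⊆
        Function.support (fun y => W (y, t) ^ 2) ∩ Set.Ioc x (x + 1) := by
      intro y hy
      constructor
      · have hd : dist y x < ε := by
          rw [Real.dist_eq, abs_sub_lt_iff]
          constructor
          · have := hy.2; have := min_le_left ε 1; linarith
          · linarith [hy.1, hε]
        have := hball hd
        rw [Real.dist_eq] at this
        have h0 : 0 < W (y, t) ^ 2 := by
          rcases abs_sub_lt_iff.mp this with ⟨h1', h2'⟩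
          linarith
        exact Function.mem_support.mpr (ne_of_gt h0)
      · exact ⟨hy.1, by have := hy.2; have := min_le_right ε 1; linarith⟩
    have hmeas : 0 < MeasureTheory.volume
        (Function.support (fun y => W (y, t) ^ 2) ∩ Set.Ioc x (x + 1)) := by
      calc (0 : ENNReal) < MeasureTheory.volume (Set.Ioo x (x + min ε 1)) := by
            rw [Real.volume_Ioo]
            simp only [add_sub_cancel_left]
            rw [ENNReal.ofReal_pos]
            exact lt_min hε one_pos
        _ ≤ _ := MeasureTheory.measure_mono hsubset
    have hpos' : 0 < ∫ y in x..(x+1), W (y, t) ^ 2 := by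
      rw [intervalIntegral.integral_pos_iff_support_of_nonneg_ae'
        (Filter.Eventually.of_forall fun y => sq_nonneg _)
        (hcont.intervalIntegrable x (x+1))]
      exact ⟨lt_add_one x, hmeas⟩
    rw [hshift, hFzero t ht] at hpos'
    exact lt_irrefl 0 hpos'
  have : U (x, t) - V (x, t) = 0 := hWz
  have : u x t - v x t = 0 := this
  linarith
end

section
/- Let N ≥ 1 be an integer, Δx = 1/N, Δt > 0, and let u be a periodic grid function. Define the periodic grid function w by w_j = ū_j − Δt ū_j (D₀u)_j, where ū_j = (u_{j+1} + u_{j−1})/2. If the CFL condition (Δt/Δx)·M·(1 + 24(Δt/Δx)·M) ≤ 3/2 holds, where M = max_{1 ≤ j ≤ N} |u_j|, then ‖w‖_h² + (Δx²/8) ‖D₀u‖_h² ≤ ‖u‖_h². -/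
/-! With `a = u_{j+1}`, `b = u_{j-1}`, `s = (a + b)/2`, `d = (a - b)/2` and `λ = Δt/Δx`
one has `w_j = s - λ s d`, `Δx (D₀u)_j = d`, `s² + d² = (a² + b²)/2` and
`3 s² d + d³ = (a³ - b³)/2`, so
`w_j² + d²/8 = (a² + b²)/2 - λ (a³ - b³)/3 + (λ² s² d² + (2λ/3) d³ - (7/8) d²)`.
The CFL condition forces `|λ M| ≤ 1/3`, which makes the bracket nonpositive. Summed over a
period, `(a² + b²)/2` gives `‖u‖²` and the cubic flux `a³ - b³` telescopes away. -/

open Finset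

namespace Function.Periodic

variable {N : ℕ}

theorem sum_Icc_comp_add_one {M : Type*} [AddCommGroup M] {f : ℤ → M}
    (hf : Periodic f (N : ℤ)) :
    ∑ i ∈ Icc (1 : ℤ) N, f (i + 1) = ∑ i ∈ Icc (1 : ℤ) N, f i := by
  have hrange (g : ℤ → M) : ∑ i ∈ Icc (1 : ℤ) N, g i = ∑ k ∈ range N, g (1 + k) := by
    simp [Int.Icc_eq_finset_map]
  rw [← sub_eq_zero, ← sum_sub_distrib, hrange]
  have htelescope := sum_range_sub (fun k : ℕ => f (1 + k)) N
  push_cast at htelescope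
  simp only [add_assoc, htelescope, hf 1, sub_self]

theorem sum_Icc_comp_sub_one {M : Type*} [AddCommGroup M] {f : ℤ → M}
    (hf : Periodic f (N : ℤ)) :
    ∑ i ∈ Icc (1 : ℤ) N, f (i - 1) = ∑ i ∈ Icc (1 : ℤ) N, f i := by
  simpa using (sum_Icc_comp_add_one (f := fun i => f (i - 1)) fun i => by
    simp only [add_sub_right_comm, hf (i - 1)]).symm

theorem abs_le_sup'_Icc {u : ℤ → ℝ} (hu : Periodic u (N : ℤ))
    (hN : (Icc (1 : ℤ) N).Nonempty) (i : ℤ) :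
    |u i| ≤ (Icc (1 : ℤ) N).sup' hN (fun j => |u j|) := by
  have hpos : (0 : ℤ) < N := by simp at hN; omega
  obtain ⟨j, hj, hij⟩ := hu.exists_mem_Ico hpos i 1
  rw [hij]
  exact le_sup' (fun j => |u j|) (by simp only [Set.mem_Ico, mem_Icc] at hj ⊢; omega)

theorem sum_Icc_burgers_flux {u : ℤ → ℝ} (hu : Periodic u (N : ℤ)) (lam : ℝ) :
    ∑ j ∈ Icc (1 : ℤ) N,
        ((u (j + 1) ^ 2 + u (j - 1) ^ 2) / 2 - lam * (u (j + 1) ^ 3 - u (j - 1) ^ 3) / 3)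
      = ∑ j ∈ Icc (1 : ℤ) N, u j ^ 2 := by
  have hsq : Periodic (fun j => u j ^ 2) N := hu.comp (· ^ 2)
  have hcube : Periodic (fun j => u j ^ 3) N := hu.comp (· ^ 3)
  simp only [sum_sub_distrib, ← sum_div, ← mul_sum, sum_add_distrib]
  rw [hsq.sum_Icc_comp_add_one, hsq.sum_Icc_comp_sub_one, hcube.sum_Icc_comp_add_one,
    hcube.sum_Icc_comp_sub_one]
  ring

end Function.Periodic

theorem abs_le_one_third_of_mul_one_add_mul_le {x : ℝ} (h : x * (1 + 24 * x) ≤ 3 / 2) :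
    |x| ≤ 1 / 3 :=
  abs_le.mpr ⟨by nlinarith, by nlinarith⟩

theorem burgers_remainder_le {s d lam M : ℝ} (hs : |s| ≤ M) (hd : |d| ≤ M)
    (hlam : |lam * M| ≤ 1 / 3) :
    lam ^ 2 * s ^ 2 * d ^ 2 + 2 * lam / 3 * d ^ 3 ≤ 7 / 8 * d ^ 2 := by
  have hM : 0 ≤ M := (abs_nonneg d).trans hd
  have hlam_s : (lam * s) ^ 2 ≤ (lam * M) ^ 2 := by
    rw [sq_le_sq, abs_mul, abs_mul, abs_of_nonneg hM]
    gcongr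
  have hlam_d : lam * d ≤ |lam * M| := by
    rw [abs_mul, abs_of_nonneg hM]
    exact (le_abs_self _).trans ((abs_mul lam d).trans_le (by gcongr))
  have hlam_sq : (lam * M) ^ 2 ≤ (1 / 3) ^ 2 :=
    sq_le_sq.mpr (hlam.trans_eq (abs_of_pos (by norm_num)).symm)
  calc lam ^ 2 * s ^ 2 * d ^ 2 + 2 * lam / 3 * d ^ 3
      = (lam * s) ^ 2 * d ^ 2 + 2 / 3 * (lam * d) * d ^ 2 := by ring
    _ ≤ (1 / 3) ^ 2 * d ^ 2 + 2 / 3 * (1 / 3) * d ^ 2 := by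
      gcongr ?_ * _ + _ * ?_ * _
      · exact hlam_s.trans hlam_sq
      · exact hlam_d.trans hlam
    _ ≤ 7 / 8 * d ^ 2 := by nlinarith [sq_nonneg d]

theorem burgers_local_energy {a b lam M : ℝ} (ha : |a| ≤ M) (hb : |b| ≤ M)
    (hlam : |lam * M| ≤ 1 / 3) :
    ((a + b) / 2 - lam * ((a + b) / 2) * ((a - b) / 2)) ^ 2 + ((a - b) / 2) ^ 2 / 8
      ≤ (a ^ 2 + b ^ 2) / 2 - lam * (a ^ 3 - b ^ 3) / 3 := by
  obtain ⟨ha₁, ha₂⟩ := abs_le.mp ha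
  obtain ⟨hb₁, hb₂⟩ := abs_le.mp hb
  have hs : |(a + b) / 2| ≤ M := abs_le.mpr ⟨by linarith, by linarith⟩
  have hd : |(a - b) / 2| ≤ M := abs_le.mpr ⟨by linarith, by linarith⟩
  linear_combination burgers_remainder_le hs hd hlam

/-- Stability of the explicit Burgers step of the fully-discrete scheme (paper's estimate
(3.12) in the proof of Lemma 3.2): if `w_j = ū_j − Δt ū_j (D₀u)_j` with
`ū_j = (u_{j+1}+u_{j−1})/2`, and the CFL condition
`(Δt/Δx) M (1 + 24 (Δt/Δx) M) ≤ 3/2` holds with `M = max_{1≤j≤N} |u_j|`, then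
`‖w‖_h² + (Δx²/8) ‖D₀u‖_h² ≤ ‖u‖_h²`. -/
theorem burgers_step_stability (N : ℕ) (hN : 1 ≤ N) (Δx Δt : ℝ)
    (hΔx : Δx = 1 / N)
    (u w : ℤ → ℝ) (hu : PeriodicGrid N u)
    (hw : ∀ j : ℤ, w j = (u (j + 1) + u (j - 1)) / 2
        - Δt * ((u (j + 1) + u (j - 1)) / 2) * D0 Δx u j)
    (M : ℝ)
    (hM : M = (Finset.Icc (1 : ℤ) (N : ℤ)).sup'
        (Finset.nonempty_Icc.mpr (by exact_mod_cast hN)) (fun j => |u j|))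
    (hcfl : (Δt / Δx) * M * (1 + 24 * (Δt / Δx) * M) ≤ 3 / 2) :
    nh2 N Δx w + (Δx ^ 2 / 8) * nh2 N Δx (D0 Δx u) ≤ nh2 N Δx u := by
  have hΔx_pos : 0 < Δx := by
    rw [hΔx]
    exact one_div_pos.mpr (by exact_mod_cast hN)
  have hu_bound (i : ℤ) : |u i| ≤ M := hM ▸ Function.Periodic.abs_le_sup'_Icc hu _ i
  have hcourant : |Δt / Δx * M| ≤ 1 / 3 := abs_le_one_third_of_mul_one_add_mul_le (by linarith)
  calc nh2 N Δx w + Δx ^ 2 / 8 * nh2 N Δx (D0 Δx u)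
      = Δx * ∑ j ∈ Icc (1 : ℤ) N, (w j ^ 2 + Δx ^ 2 / 8 * D0 Δx u j ^ 2) := by
        simp only [nh2, sum_add_distrib, ← mul_sum]
        ring
    _ ≤ Δx * ∑ j ∈ Icc (1 : ℤ) N, ((u (j + 1) ^ 2 + u (j - 1) ^ 2) / 2
          - Δt / Δx * (u (j + 1) ^ 3 - u (j - 1) ^ 3) / 3) := by
        gcongr with j
        refine Eq.trans_le ?_ (burgers_local_energy (hu_bound (j + 1)) (hu_bound (j - 1)) hcourant)
        rw [hw j, D0]
        field_simp
    _ = nh2 N Δx u := by rw [Function.Periodic.sum_Icc_burgers_flux hu, nh2]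
end

section
/- Let N ≥ 1 be an integer, Δx = 1/N, Δt > 0, and let v and w be periodic grid functions satisfying, for all j, v_j = w_j − Δt (D₋D₊²v)_j + Δt (D₊³D₋²v)_j. Then ‖v‖_h² + Δx·Δt·‖D₊D₋v‖_h² + Δx·Δt·‖D₋D₊²v‖_h² ≤ ‖w‖_h². -/
lemma per_shift (N : ℕ) (hN : 1 ≤ N) (f : ℤ → ℝ) (hf : PeriodicGrid N f) :
    ∑ i ∈ Finset.Icc (1 : ℤ) (N : ℤ), f (i + 1) = ∑ i ∈ Finset.Icc (1 : ℤ) (N : ℤ), f i := by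
  have hN1 : (1 : ℤ) ≤ (N : ℤ) := by exact_mod_cast hN
  have h1 : ∑ i ∈ Finset.Icc (1 : ℤ) (N : ℤ), f (i + 1)
      = ∑ i ∈ Finset.Icc (2 : ℤ) ((N : ℤ) + 1), f i := by
    apply Finset.sum_nbij' (fun i => i + 1) (fun j => j - 1) <;>
      simp (config := { contextual := true }) [Finset.mem_Icc] <;> omega
  have h2 : ∑ i ∈ Finset.Icc (2 : ℤ) ((N : ℤ) + 1), f i
      = (∑ i ∈ Finset.Icc (2 : ℤ) (N : ℤ), f i) + f ((N : ℤ) + 1) := by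
    have : Finset.Icc (2 : ℤ) ((N : ℤ) + 1) = insert ((N : ℤ) + 1) (Finset.Icc 2 (N : ℤ)) := by
      ext x; simp only [Finset.mem_Icc, Finset.mem_insert]; omega
    rw [this, Finset.sum_insert (by simp)]; ring
  have h3 : f ((N : ℤ) + 1) = f 1 := by
    have := hf 1; rw [← this]; ring_nf
  have h4 : ∑ i ∈ Finset.Icc (1 : ℤ) (N : ℤ), f i
      = f 1 + ∑ i ∈ Finset.Icc (2 : ℤ) (N : ℤ), f i := by
    have : Finset.Icc (1 : ℤ) (N : ℤ) = insert 1 (Finset.Icc 2 (N : ℤ)) := by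
      ext x; simp only [Finset.mem_Icc, Finset.mem_insert]; omega
    rw [this, Finset.sum_insert (by simp)]
  rw [h1, h2, h3, h4]; ring

lemma perDp (N : ℕ) (h : ℝ) (u : ℤ → ℝ) (hu : PeriodicGrid N u) : PeriodicGrid N (Dp h u) := by
  intro i
  simp only [Dp]
  have h1 : i + (N : ℤ) + 1 = (i + 1) + N := by ring
  rw [h1, hu, hu]

lemma perDm (N : ℕ) (h : ℝ) (u : ℤ → ℝ) (hu : PeriodicGrid N u) : PeriodicGrid N (Dm h u) := by
  intro i
  simp only [Dm]
  have h1 : i + (N : ℤ) - 1 = (i - 1) + N := by ring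
  rw [h1, hu, hu]

/-- summation by parts: `∑ f (Dm g) = - ∑ (Dp f) g`. -/
lemma sbp (N : ℕ) (hN : 1 ≤ N) (h : ℝ) (f g : ℤ → ℝ)
    (hf : PeriodicGrid N f) (hg : PeriodicGrid N g) :
    ∑ i ∈ Finset.Icc (1 : ℤ) (N : ℤ), f i * Dm h g i
      = - ∑ i ∈ Finset.Icc (1 : ℤ) (N : ℤ), Dp h f i * g i := by
  have key : ∑ i ∈ Finset.Icc (1 : ℤ) (N : ℤ), f (i + 1) * g ((i + 1) - 1)
      = ∑ i ∈ Finset.Icc (1 : ℤ) (N : ℤ), f i * g (i - 1) := by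
    apply per_shift N hN (fun i => f i * g (i - 1))
    intro i
    show f (i + (N : ℤ)) * g (i + (N : ℤ) - 1) = f i * g (i - 1)
    have h1 : i + (N : ℤ) - 1 = (i - 1) + N := by ring
    rw [h1, hf i, hg (i - 1)]
  have key2 : ∑ i ∈ Finset.Icc (1 : ℤ) (N : ℤ), f (i + 1) * g i
      = ∑ i ∈ Finset.Icc (1 : ℤ) (N : ℤ), f i * g (i - 1) := by
    rw [← key]; apply Finset.sum_congr rfl; intro i _
    have : (i + 1) - 1 = i := by ring
    rw [this]
  have expand : ∀ i : ℤ, f i * Dm h g i + Dp h f i * g i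
      = (f (i + 1) * g i) / h - (f i * g (i - 1)) / h := by
    intro i; simp only [Dm, Dp]; ring
  have : ∑ i ∈ Finset.Icc (1 : ℤ) (N : ℤ), (f i * Dm h g i + Dp h f i * g i)
      = ∑ i ∈ Finset.Icc (1 : ℤ) (N : ℤ),
        ((f (i + 1) * g i) / h - (f i * g (i - 1)) / h) :=
    Finset.sum_congr rfl (fun i _ => expand i)
  rw [Finset.sum_add_distrib] at this
  rw [Finset.sum_sub_distrib, ← Finset.sum_div, ← Finset.sum_div, key2] at this
  linarith

lemma sbp_p (N : ℕ) (hN : 1 ≤ N) (h : ℝ) (f g : ℤ → ℝ)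
    (hf : PeriodicGrid N f) (hg : PeriodicGrid N g) :
    ∑ i ∈ Finset.Icc (1 : ℤ) (N : ℤ), f i * Dp h g i
      = - ∑ i ∈ Finset.Icc (1 : ℤ) (N : ℤ), Dm h f i * g i := by
  have := sbp N hN h g f hg hf
  have e1 : ∑ i ∈ Finset.Icc (1 : ℤ) (N : ℤ), f i * Dp h g i
      = ∑ i ∈ Finset.Icc (1 : ℤ) (N : ℤ), Dp h g i * f i :=
    Finset.sum_congr rfl (fun i _ => mul_comm _ _)
  have e2 : ∑ i ∈ Finset.Icc (1 : ℤ) (N : ℤ), Dm h f i * g i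
      = ∑ i ∈ Finset.Icc (1 : ℤ) (N : ℤ), g i * Dm h f i :=
    Finset.sum_congr rfl (fun i _ => mul_comm _ _)
  rw [e1, e2]; linarith

lemma quad (N : ℕ) (hN : 1 ≤ N) (h : ℝ) (hh : h ≠ 0) (u : ℤ → ℝ)
    (hu : PeriodicGrid N u) :
    ∑ i ∈ Finset.Icc (1 : ℤ) (N : ℤ), u i * Dp h u i
      = - (h / 2) * ∑ i ∈ Finset.Icc (1 : ℤ) (N : ℤ), (Dp h u i) ^ 2 := by
  have expand : ∀ i : ℤ, u i * Dp h u i + (h / 2) * (Dp h u i) ^ 2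
      = (u (i + 1)) ^ 2 / (2 * h) - (u i) ^ 2 / (2 * h) := by
    intro i; simp only [Dp]; field_simp; ring
  have tele : ∑ i ∈ Finset.Icc (1 : ℤ) (N : ℤ), (u (i + 1)) ^ 2 / (2 * h)
      = ∑ i ∈ Finset.Icc (1 : ℤ) (N : ℤ), (u i) ^ 2 / (2 * h) := by
    apply per_shift N hN (fun i => (u i) ^ 2 / (2 * h))
    intro i; show (u (i + (N : ℤ))) ^ 2 / (2 * h) = (u i) ^ 2 / (2 * h)
    rw [hu i]
  have : ∑ i ∈ Finset.Icc (1 : ℤ) (N : ℤ),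
        (u i * Dp h u i + (h / 2) * (Dp h u i) ^ 2)
      = ∑ i ∈ Finset.Icc (1 : ℤ) (N : ℤ),
        ((u (i + 1)) ^ 2 / (2 * h) - (u i) ^ 2 / (2 * h)) :=
    Finset.sum_congr rfl (fun i _ => expand i)
  rw [Finset.sum_add_distrib, Finset.sum_sub_distrib, tele, ← Finset.mul_sum] at this
  linarith

lemma id2 (h : ℝ) (v : ℤ → ℝ) (i : ℤ) : Dp h (Dp h v) i = Dp h (Dm h v) (i + 1) := by
  simp only [Dp, Dm, add_sub_cancel_right]

lemma id3 (h : ℝ) (v : ℤ → ℝ) (i : ℤ) :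
    Dm h (Dp h (Dp h v)) i = Dp h (Dm h (Dm h v)) (i + 1) := by
  simp only [Dp, Dm, add_sub_cancel_right, sub_add_cancel]

lemma sq_shift (N : ℕ) (hN : 1 ≤ N) (f : ℤ → ℝ) (hf : PeriodicGrid N f)
    (g : ℤ → ℝ) (hfg : ∀ i, g i = f (i + 1)) :
    ∑ i ∈ Finset.Icc (1 : ℤ) (N : ℤ), (g i) ^ 2
      = ∑ i ∈ Finset.Icc (1 : ℤ) (N : ℤ), (f i) ^ 2 := by
  have : ∑ i ∈ Finset.Icc (1 : ℤ) (N : ℤ), (g i) ^ 2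
      = ∑ i ∈ Finset.Icc (1 : ℤ) (N : ℤ), (fun j => (f j) ^ 2) (i + 1) :=
    Finset.sum_congr rfl (fun i _ => by rw [hfg i])
  rw [this]
  apply per_shift N hN (fun j => (f j) ^ 2)
  intro i; show (f (i + (N : ℤ))) ^ 2 = (f i) ^ 2
  rw [hf i]


/-- Unconditional stability of the implicit dispersive step of the fully-discrete scheme
(paper's estimate (3.14)): if the periodic grid functions `v, w` satisfy
`v_j = w_j − Δt (D₋D₊²v)_j + Δt (D₊³D₋²v)_j` for all `j`, then
`‖v‖_h² + Δx Δt ‖D₊D₋v‖_h² + Δx Δt ‖D₋D₊²v‖_h² ≤ ‖w‖_h²` (with `Δx = 1/N`). -/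
theorem dispersive_step_stability (N : ℕ) (hN : 1 ≤ N) (Δx Δt : ℝ)
    (hΔx : Δx = 1 / N) (hΔt : 0 < Δt)
    (v w : ℤ → ℝ) (hv : PeriodicGrid N v) (hw : PeriodicGrid N w)
    (heq : ∀ j : ℤ, v j = w j - Δt * Dm Δx (Dp Δx (Dp Δx v)) j
        + Δt * Dp Δx (Dp Δx (Dp Δx (Dm Δx (Dm Δx v)))) j) :
    nh2 N Δx v + Δx * Δt * nh2 N Δx (Dp Δx (Dm Δx v))
        + Δx * Δt * nh2 N Δx (Dm Δx (Dp Δx (Dp Δx v)))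
      ≤ nh2 N Δx w := by
  have hNpos : (0 : ℝ) < N := by positivity
  have hΔxpos : 0 < Δx := by rw [hΔx]; positivity
  have hΔxne : Δx ≠ 0 := ne_of_gt hΔxpos
  have hDpv := perDp N Δx v hv
  have hDpDpv := perDp N Δx _ hDpv
  have hDmv := perDm N Δx v hv
  have hDmDmv := perDm N Δx _ hDmv
  have hDpDmDmv := perDp N Δx _ hDmDmv
  have hDpDpDmDmv := perDp N Δx _ hDpDmDmv
  have hDpDmv := perDp N Δx _ hDmv
  have hDmDpDpv := perDm N Δx _ hDpDpv
  have A : ∑ i ∈ Finset.Icc (1 : ℤ) (N : ℤ), v i * Dm Δx (Dp Δx (Dp Δx v)) i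
      = (Δx / 2) * ∑ i ∈ Finset.Icc (1 : ℤ) (N : ℤ), (Dp Δx (Dp Δx v) i) ^ 2 := by
    rw [sbp N hN Δx v (Dp Δx (Dp Δx v)) hv hDpDpv,
      quad N hN Δx hΔxne (Dp Δx v) hDpv]
    ring
  have B : ∑ i ∈ Finset.Icc (1 : ℤ) (N : ℤ),
        v i * Dp Δx (Dp Δx (Dp Δx (Dm Δx (Dm Δx v)))) i
      = -(Δx / 2) * ∑ i ∈ Finset.Icc (1 : ℤ) (N : ℤ),
          (Dp Δx (Dm Δx (Dm Δx v)) i) ^ 2 := by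
    rw [sbp_p N hN Δx v (Dp Δx (Dp Δx (Dm Δx (Dm Δx v)))) hv hDpDpDmDmv,
      sbp_p N hN Δx (Dm Δx v) (Dp Δx (Dm Δx (Dm Δx v))) hDmv hDpDmDmv,
      quad N hN Δx hΔxne (Dm Δx (Dm Δx v)) hDmDmv]
    ring
  have C : ∑ i ∈ Finset.Icc (1 : ℤ) (N : ℤ), (Dp Δx (Dm Δx v) i) ^ 2
      = ∑ i ∈ Finset.Icc (1 : ℤ) (N : ℤ), (Dp Δx (Dp Δx v) i) ^ 2 := by
    have := sq_shift N hN (Dp Δx (Dm Δx v)) hDpDmv (Dp Δx (Dp Δx v)) (id2 Δx v)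
    linarith
  have D : ∑ i ∈ Finset.Icc (1 : ℤ) (N : ℤ), (Dm Δx (Dp Δx (Dp Δx v)) i) ^ 2
      = ∑ i ∈ Finset.Icc (1 : ℤ) (N : ℤ), (Dp Δx (Dm Δx (Dm Δx v)) i) ^ 2 :=
    sq_shift N hN (Dp Δx (Dm Δx (Dm Δx v))) hDpDmDmv (Dm Δx (Dp Δx (Dp Δx v))) (id3 Δx v)
  have Esum : ∑ i ∈ Finset.Icc (1 : ℤ) (N : ℤ), (w i) ^ 2
      = ∑ i ∈ Finset.Icc (1 : ℤ) (N : ℤ), (v i) ^ 2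
        + 2 * Δt * ∑ i ∈ Finset.Icc (1 : ℤ) (N : ℤ),
            v i * Dm Δx (Dp Δx (Dp Δx v)) i
        - 2 * Δt * ∑ i ∈ Finset.Icc (1 : ℤ) (N : ℤ),
            v i * Dp Δx (Dp Δx (Dp Δx (Dm Δx (Dm Δx v)))) i
        + Δt ^ 2 * ∑ i ∈ Finset.Icc (1 : ℤ) (N : ℤ),
            (Dm Δx (Dp Δx (Dp Δx v)) i
              - Dp Δx (Dp Δx (Dp Δx (Dm Δx (Dm Δx v)))) i) ^ 2 := by
    have step : ∀ i : ℤ, (w i) ^ 2 = (v i) ^ 2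
        + 2 * Δt * (v i * Dm Δx (Dp Δx (Dp Δx v)) i)
        - 2 * Δt * (v i * Dp Δx (Dp Δx (Dp Δx (Dm Δx (Dm Δx v)))) i)
        + Δt ^ 2 * (Dm Δx (Dp Δx (Dp Δx v)) i
              - Dp Δx (Dp Δx (Dp Δx (Dm Δx (Dm Δx v)))) i) ^ 2 := by
      intro i
      have hwi : w i = v i + Δt * Dm Δx (Dp Δx (Dp Δx v)) i
          - Δt * Dp Δx (Dp Δx (Dp Δx (Dm Δx (Dm Δx v)))) i := by
        have := heq i; linarith
      rw [hwi]; ring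
    rw [Finset.sum_congr rfl (fun i _ => step i)]
    rw [Finset.sum_add_distrib, Finset.sum_sub_distrib, Finset.sum_add_distrib,
      ← Finset.mul_sum, ← Finset.mul_sum, ← Finset.mul_sum]
  have hnn : (0 : ℝ) ≤ ∑ i ∈ Finset.Icc (1 : ℤ) (N : ℤ),
      (Dm Δx (Dp Δx (Dp Δx v)) i
        - Dp Δx (Dp Δx (Dp Δx (Dm Δx (Dm Δx v)))) i) ^ 2 :=
    Finset.sum_nonneg (fun i _ => sq_nonneg _)
  simp only [nh2]
  rw [C, D, Esum, A, B]
  nlinarith [mul_nonneg (mul_nonneg hΔxpos.le (sq_nonneg Δt)) hnn,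
    mul_pos hΔxpos hΔt]
end

section
/- For every c ∈ ℝ, the function u(x,t) = (105/169) · sech⁴( (x − 36t/169 − c) / (2√13) ) is an exact solution of the Kawahara equation: for all x, t ∈ ℝ one has ∂ₜu = −u ∂ₓu − ∂ₓ³u + ∂ₓ⁵u. -/
/-!
A travelling wave `u x t = w (x - v t - c)` solves the Kawahara equation as soon as its profile
satisfies the ODE `-v w' = -w w' - w''' + w⁽⁵⁾`. Since `sech' = -sech tanh` and `tanh' = sech²`,
every odd derivative of `sech⁴ (k ξ)` is `tanh` times a combination of `sech⁴, sech⁶, sech⁸`;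
for `w = A sech⁴ (k ξ)` the ODE becomes three coefficient equations, which hold exactly for
`k² = 1/52`, `A = 105/169`, `v = 36/169`.
-/

open Real

noncomputable def sech (z : ℝ) : ℝ := (cosh z)⁻¹

lemma contDiff_sech {n : WithTop ℕ∞} : ContDiff ℝ n sech :=
  contDiff_cosh.inv fun z => (cosh_pos z).ne'

lemma hasDerivAt_sech (z : ℝ) : HasDerivAt sech (-sech z * tanh z) z := by
  refine ((hasDerivAt_cosh z).inv (cosh_pos z).ne').congr_deriv ?_
  rw [sech, tanh_eq_sinh_div_cosh]
  ring

@[fun_prop]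
lemma differentiable_sech : Differentiable ℝ sech :=
  fun z => (hasDerivAt_sech z).differentiableAt

lemma hasDerivAt_tanh (z : ℝ) : HasDerivAt tanh (sech z ^ 2) z := by
  have h := (hasDerivAt_sinh z).div (hasDerivAt_cosh z) (cosh_pos z).ne'
  rw [show tanh = sinh / cosh from funext tanh_eq_sinh_div_cosh]
  refine h.congr_deriv ?_
  rw [sech]
  field_simp
  linear_combination cosh_sq_sub_sinh_sq z

lemma hasDerivAt_sech_pow (n : ℕ) (z : ℝ) :
    HasDerivAt (fun z => sech z ^ n) (-n * sech z ^ n * tanh z) z := by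
  rcases n with _ | n
  · simpa using hasDerivAt_const z (1 : ℝ)
  · refine ((hasDerivAt_sech z).pow (n + 1)).congr_deriv ?_
    push_cast
    ring

lemma hasDerivAt_sech_pow_mul_tanh (n : ℕ) (z : ℝ) :
    HasDerivAt (fun z => sech z ^ n * tanh z) ((n + 1) * sech z ^ (n + 2) - n * sech z ^ n) z := by
  refine ((hasDerivAt_sech_pow n z).mul (hasDerivAt_tanh z)).congr_deriv ?_
  have h : tanh z ^ 2 = 1 - sech z ^ 2 := by
    rw [sech, tanh_eq_sinh_div_cosh, div_pow, sinh_sq]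
    field_simp
  linear_combination (-(n : ℝ) * sech z ^ n) * h

lemma iteratedDeriv_one_sech_pow_four :
    iteratedDeriv 1 (fun z => sech z ^ 4) = fun z => -4 * (sech z ^ 4 * tanh z) := by
  rw [iteratedDeriv_one]
  funext z
  exact (hasDerivAt_sech_pow 4 z).deriv.trans (by push_cast; ring)

lemma iteratedDeriv_two_sech_pow_four :
    iteratedDeriv 2 (fun z => sech z ^ 4) = fun z => 16 * sech z ^ 4 - 20 * sech z ^ 6 := by
  rw [iteratedDeriv_succ, iteratedDeriv_one_sech_pow_four]
  funext z
  exact ((hasDerivAt_sech_pow_mul_tanh 4 z).const_mul (-4)).deriv.trans (by push_cast; ring)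

lemma iteratedDeriv_three_sech_pow_four :
    iteratedDeriv 3 (fun z => sech z ^ 4) =
      fun z => -64 * (sech z ^ 4 * tanh z) + 120 * (sech z ^ 6 * tanh z) := by
  rw [iteratedDeriv_succ, iteratedDeriv_two_sech_pow_four]
  funext z
  exact (((hasDerivAt_sech_pow 4 z).const_mul 16).sub
    ((hasDerivAt_sech_pow 6 z).const_mul 20)).deriv.trans (by push_cast; ring)

lemma iteratedDeriv_four_sech_pow_four :
    iteratedDeriv 4 (fun z => sech z ^ 4) =
      fun z => 256 * sech z ^ 4 - 1040 * sech z ^ 6 + 840 * sech z ^ 8 := by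
  rw [iteratedDeriv_succ, iteratedDeriv_three_sech_pow_four]
  funext z
  exact (((hasDerivAt_sech_pow_mul_tanh 4 z).const_mul (-64)).add
    ((hasDerivAt_sech_pow_mul_tanh 6 z).const_mul 120)).deriv.trans (by push_cast; ring)

lemma iteratedDeriv_five_sech_pow_four :
    iteratedDeriv 5 (fun z => sech z ^ 4) = fun z =>
      -1024 * (sech z ^ 4 * tanh z) + 6240 * (sech z ^ 6 * tanh z) - 6720 * (sech z ^ 8 * tanh z) := by
  rw [iteratedDeriv_succ, iteratedDeriv_four_sech_pow_four]
  funext z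
  exact ((((hasDerivAt_sech_pow 4 z).const_mul 256).sub
    ((hasDerivAt_sech_pow 6 z).const_mul 1040)).add
    ((hasDerivAt_sech_pow 8 z).const_mul 840)).deriv.trans (by push_cast; ring)

def IsKawaharaProfile (v : ℝ) (w : ℝ → ℝ) : Prop :=
  ∀ ξ, -v * deriv w ξ = -w ξ * deriv w ξ - iteratedDeriv 3 w ξ + iteratedDeriv 5 w ξ

def IsKawaharaSolution (u : ℝ → ℝ → ℝ) : Prop :=
  ∀ x t, deriv (fun s => u x s) t =
    -u x t * deriv (fun y => u y t) x - iteratedDeriv 3 (fun y => u y t) x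
      + iteratedDeriv 5 (fun y => u y t) x

lemma IsKawaharaProfile.isKawaharaSolution {v : ℝ} {w : ℝ → ℝ} (hw : IsKawaharaProfile v w)
    (hd : Differentiable ℝ w) (c : ℝ) : IsKawaharaSolution fun x t => w (x - v * t - c) := by
  intro x t
  dsimp only
  have hshift : (fun y => w (y - v * t - c)) = fun y => w (y - (v * t + c)) := by
    funext y; ring_nf
  have hphase : HasDerivAt (fun s => x - v * s - c) (-v) t := by
    simpa using ((hasDerivAt_id t).const_mul v).const_sub x |>.sub_const c
  have htime : HasDerivAt (fun s => w (x - v * s - c)) (deriv w (x - v * t - c) * -v) t :=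
    (hd _).hasDerivAt.comp t hphase
  rw [htime.deriv, hshift, deriv_comp_sub_const, iteratedDeriv_comp_sub_const,
    iteratedDeriv_comp_sub_const]
  simp only [← sub_sub]
  linear_combination hw (x - v * t - c)

lemma isKawaharaProfile_sech_pow_four {k : ℝ} (hk : k ^ 2 = 1 / 52) :
    IsKawaharaProfile (36 / 169) fun ξ => 105 / 169 * sech (k * ξ) ^ 4 := by
  intro ξ
  have hscale (n : ℕ) : iteratedDeriv n (fun ξ => 105 / 169 * sech (k * ξ) ^ 4) ξ =
      105 / 169 * (k ^ n * iteratedDeriv n (fun z => sech z ^ 4) (k * ξ)) := by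
    rw [iteratedDeriv_const_mul_field,
      iteratedDeriv_comp_const_mul (f := fun z => sech z ^ 4) (contDiff_sech.pow 4)]
  have hk3 : k ^ 3 = k / 52 := by linear_combination k * hk
  have hk5 : k ^ 5 = k / 2704 := by linear_combination (k ^ 3 + k / 52) * hk
  rw [← iteratedDeriv_one, hscale, hscale, hscale, iteratedDeriv_one_sech_pow_four,
    iteratedDeriv_three_sech_pow_four, iteratedDeriv_five_sech_pow_four, hk3, hk5]
  ring

/-- Exact travelling-wave (soliton) solution used in the paper's Numerical Experiment 1:
for every `c ∈ ℝ`, `u(x,t) = (105/169) sech⁴((x − 36t/169 − c)/(2√13))` solves the Kawahara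
equation `u_t = −u u_x − u_{xxx} + u_{xxxxx}` (with `sech y = 1/cosh y`). -/
theorem kawahara_soliton (c : ℝ)
    (u : ℝ → ℝ → ℝ)
    (hu : ∀ x t : ℝ,
      u x t = (105 / 169) * (1 / Real.cosh ((x - 36 * t / 169 - c) / (2 * Real.sqrt 13))) ^ 4) :
    ∀ x t : ℝ,
      deriv (fun s => u x s) t =
        - u x t * deriv (fun y => u y t) x
        - iteratedDeriv 3 (fun y => u y t) x
        + iteratedDeriv 5 (fun y => u y t) x := by
  have hk : (2 * √13)⁻¹ ^ 2 = 1 / 52 := by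
    rw [inv_pow, mul_pow, sq_sqrt (by norm_num)]; norm_num
  have hwave : u = fun x t => 105 / 169 * sech ((2 * √13)⁻¹ * (x - 36 / 169 * t - c)) ^ 4 := by
    funext x t
    rw [hu, sech, one_div, div_eq_inv_mul]
    ring_nf
  subst hwave
  exact (isKawaharaProfile_sech_pow_four hk).isKawaharaSolution (by fun_prop) c
end
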